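/- arXiv:1102.2471 — 6 statements merged into one kernel-verified Lean document; each statement's English description precedes it below -/
import Mathlib

section
/- Let I ⊂ F[x_1,...,x_d] be a zero-dimensional ideal and let O be a monomial order quotient basis for I. Then O is the unique monomial order quotient basis for I if and only if for every monomial x^α in the corner C[O], the set of monomials {x^β : 0 ≤ β ≤ α componentwise} is linearly dependent modulo I. -/
/-!
If `O` is the only monomial order quotient basis of `I`, it is the set of standard exponents of
every monomial order, in particular of the lexicographic orders comparing the exponent of `x_i`
first. Reducing `x^α` modulo `I` along each of these orders writes it in the basis `O` using only
exponents `γ` with `γ_i ≤ α_i`; by uniqueness of coordinates the expansion uses only divisors of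
`x^α`, and proper ones when `α` lies in the corner, so the divisors of `x^α` are dependent.
Conversely, if another basis `O'` were not contained in `O`, a minimal element of `O' \ O` would
lie in the corner of `O` with all its divisors in `O'`, hence independent. So `O' ⊆ O`, and
`O' = O` since `O'` spans and `O` is independent.
-/

open MvPolynomial

/-- The corner of an order ideal `O` of monomials (given by exponent vectors). -/
def corner {d : ℕ} (O : Set (Fin d →₀ ℕ)) : Set (Fin d →₀ ℕ) :=
  {α | α ∉ O ∧ ∀ i : Fin d, α i ≠ 0 → α - Finsupp.single i 1 ∈ O}
/-- `O` (a set of exponent vectors) is a monomial order quotient basis for `I`: it is a finite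
order ideal (lower set of exponents) whose monomials give an `F`-vector space basis of
`F[x]/I`. -/
def IsMOQB {d : ℕ} {F : Type*} [Field F] (I : Ideal (MvPolynomial (Fin d) F))
    (O : Set (Fin d →₀ ℕ)) : Prop :=
  O.Finite ∧ IsLowerSet O ∧
  LinearIndependent F (fun t : O => Ideal.Quotient.mk I (monomial (t : Fin d →₀ ℕ) (1 : F))) ∧
  Submodule.span F
    (Set.range fun t : O => Ideal.Quotient.mk I (monomial (t : Fin d →₀ ℕ) (1 : F))) = ⊤

section LinearIndependence

open Submodule

variable {ι K V : Type*}

theorem LinearIndepOn.mem_span_image_inter_iInter [Semiring K] [AddCommMonoid V] [Module K V]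
    {κ : Type*} {v : ι → V} {s : Set ι} (hv : LinearIndepOn K v s) {t : κ → Set ι} {x : V}
    (hx : x ∈ span K (v '' s)) (hxt : ∀ k, x ∈ span K (v '' (s ∩ t k))) :
    x ∈ span K (v '' (s ∩ ⋂ k, t k)) := by
  obtain ⟨l, hls, rfl⟩ := (Finsupp.mem_span_image_iff_linearCombination K).1 hx
  refine (Finsupp.mem_span_image_iff_linearCombination K).2
    ⟨l, fun j hj => ⟨hls hj, Set.mem_iInter.2 fun k => ?_⟩, rfl⟩
  obtain ⟨lk, hlk, hlk_eq⟩ := (Finsupp.mem_span_image_iff_linearCombination K).1 (hxt k)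
  have hl : lk = l := linearIndepOn_iffₛ.1 hv lk
    (Finsupp.supported_mono Set.inter_subset_left hlk) l hls hlk_eq
  exact (hlk (hl ▸ hj)).2

theorem LinearIndepOn.eq_of_subset_of_subset_span [Ring K] [Nontrivial K] [AddCommGroup V]
    [Module K V] {v : ι → V} {s t : Set ι} (hv : LinearIndepOn K v s) (hts : t ⊆ s)
    (hspan : v '' s ⊆ span K (v '' t)) : t = s := by
  refine hts.antisymm fun i hi => ?_
  by_contra hit
  refine hv.notMem_span hi (span_le.2 ?_ (hspan ⟨i, hi, rfl⟩))
  rintro _ ⟨j, hj, rfl⟩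
  exact subset_span ⟨j, ⟨hts hj, fun h => hit (h ▸ hj)⟩, rfl⟩

theorem linearIndepOn_of_notMem_span_lt {β : Type*} [LinearOrder β] [DivisionRing K]
    [AddCommGroup V] [Module K V] {v : ι → V} {s : Set ι} {f : ι → β} (hf : Set.InjOn f s)
    (h : ∀ i ∈ s, v i ∉ span K (v '' {j | f j < f i})) : LinearIndepOn K v s := by
  rw [linearIndepOn_iff]
  intro l hl hl0
  by_contra hne
  obtain ⟨i, hi, hmax⟩ := l.support.exists_max_image f (Finsupp.support_nonempty_iff.2 hne)
  have hls := (Finsupp.mem_supported K l).1 hl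
  have hlower : l.erase i ∈ Finsupp.supported K K {j | f j < f i} := by
    intro j hj
    classical
    rw [Finsupp.support_erase, Finset.coe_erase] at hj
    exact (hmax j hj.1).lt_of_ne fun hji => hj.2 (hf (hls hj.1) (hls hi) hji)
  have hsmul : l i • v i ∈ span K (v '' {j | f j < f i}) := by
    rw [← Finsupp.single_add_erase i l, map_add, Finsupp.linearCombination_single] at hl0
    rw [eq_neg_of_add_eq_zero_left hl0]
    exact neg_mem ((Finsupp.mem_span_image_iff_linearCombination K).2 ⟨_, hlower, rfl⟩)
  exact h i (hls hi) ((smul_mem_iff _ (Finsupp.mem_support_iff.1 hi)).1 hsmul)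

end LinearIndependence

section StandardMonomials

open Submodule

variable {F σ : Type*} [Field F] (I : Ideal (MvPolynomial σ F))

noncomputable def monomialResidue (μ : σ →₀ ℕ) : MvPolynomial σ F ⧸ I :=
  Ideal.Quotient.mk I (monomial μ 1)

theorem monomialResidue_add (μ ν : σ →₀ ℕ) :
    monomialResidue I (μ + ν) = monomialResidue I μ * monomialResidue I ν := by
  unfold monomialResidue
  rw [← map_mul, monomial_mul, one_mul]

theorem span_range_monomialResidue : span F (Set.range (monomialResidue I)) = ⊤ := by
  have h : monomialResidue I = (Ideal.Quotient.mkₐ F I).toLinearMap ∘ basisMonomials σ F := by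
    ext μ
    simp [monomialResidue, coe_basisMonomials]
  rw [h, Set.range_comp, span_image, (basisMonomials σ F).span_eq, Submodule.map_top,
    LinearMap.range_eq_top]
  exact Ideal.Quotient.mkₐ_surjective F I

variable (m : MonomialOrder σ)

/-- The exponents that are not leading exponents, with respect to `m`, of elements of `I`. -/
def standardExponents : Set (σ →₀ ℕ) :=
  {μ | monomialResidue I μ ∉ span F (monomialResidue I '' {ν | m.toSyn ν < m.toSyn μ})}

theorem isLowerSet_standardExponents : IsLowerSet (standardExponents I m) := by
  intro μ μ' hle hμ
  by_contra hμ'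
  obtain ⟨δ, rfl⟩ := le_iff_exists_add.1 hle
  refine hμ ?_
  have hmul := Submodule.apply_mem_span_image_of_mem_span
    (LinearMap.mulLeft F (monomialResidue I δ)) (not_not.1 hμ')
  rw [LinearMap.mulLeft_apply, ← monomialResidue_add, add_comm] at hmul
  refine span_le.2 ?_ hmul
  rintro _ ⟨_, ⟨ν, hν, rfl⟩, rfl⟩
  refine subset_span ⟨ν + δ, ?_, ?_⟩
  · rw [Set.mem_ofPred_eq, map_add, map_add]
    exact add_lt_add_left hν _
  · rw [LinearMap.mulLeft_apply, ← monomialResidue_add, add_comm]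

theorem linearIndepOn_standardExponents :
    LinearIndepOn F (monomialResidue I) (standardExponents I m) :=
  linearIndepOn_of_notMem_span_lt m.toSyn.injective.injOn fun _ hμ => hμ

theorem monomialResidue_mem_span_standardExponents (μ : σ →₀ ℕ) :
    monomialResidue I μ ∈ span F
      (monomialResidue I '' {γ | γ ∈ standardExponents I m ∧ m.toSyn γ ≤ m.toSyn μ}) := by
  induction μ using (InvImage.wf m.toSyn m.wellFoundedLT_syn.wf).induction with
  | _ μ ih =>
    by_cases hμ : μ ∈ standardExponents I m
    · exact subset_span ⟨μ, ⟨hμ, le_rfl⟩, rfl⟩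
    refine span_le.2 ?_ (not_not.1 hμ)
    rintro _ ⟨ν, hν, rfl⟩
    refine span_mono (Set.image_mono ?_) (ih ν hν)
    exact fun γ hγ => ⟨hγ.1, hγ.2.trans hν.le⟩

theorem span_standardExponents :
    span F (monomialResidue I '' standardExponents I m) = ⊤ := by
  rw [eq_top_iff, ← span_range_monomialResidue I, span_le]
  rintro _ ⟨μ, rfl⟩
  exact span_mono (Set.image_mono fun γ hγ => hγ.1)
    (monomialResidue_mem_span_standardExponents I m μ)

end StandardMonomials

noncomputable def MonomialOrder.swapLex {d : ℕ} (i : Fin d) : MonomialOrder (Fin d) where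
  syn := Lex (Fin d →₀ ℕ)
  toSyn := (Finsupp.domCongr (Equiv.swap ⟨0, i.pos⟩ i)).trans
    { toEquiv := toLex, map_add' := toLex_add }
  toSyn_monotone _ _ h := by
    exact Finsupp.toLex_monotone fun _ => h _

theorem MonomialOrder.swapLex_toSyn_lt {d : ℕ} (i : Fin d) {μ ν : Fin d →₀ ℕ} (h : μ i < ν i) :
    (swapLex i).toSyn μ < (swapLex i).toSyn ν := by
  let e := Equiv.swap (⟨0, i.pos⟩ : Fin d) i
  have hfirst : ∃ k, (∀ j, j < k → μ.equivMapDomain e j = ν.equivMapDomain e j) ∧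
      μ.equivMapDomain e k < ν.equivMapDomain e k :=
    ⟨⟨0, i.pos⟩, fun j hj => absurd hj (by simp [Fin.lt_def]), by
      simpa [e, Finsupp.equivMapDomain_apply, Equiv.swap_apply_left] using h⟩
  exact Finsupp.Lex.lt_iff.2 hfirst

section Corner

variable {d : ℕ} {O : Set (Fin d →₀ ℕ)}

theorem mem_corner_of_minimal {O' : Set (Fin d →₀ ℕ)} (hO' : IsLowerSet O') {α : Fin d →₀ ℕ}
    (hα : Minimal (· ∈ O' \ O) α) : α ∈ corner O := by
  refine ⟨hα.prop.2, fun i hi => ?_⟩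
  have hlt : α - Finsupp.single i 1 < α := by
    refine lt_of_le_of_ne tsub_le_self fun h => ?_
    have := congrArg (· i) h
    simp only [Finsupp.tsub_apply, Finsupp.single_eq_same] at this
    omega
  by_contra hβ
  exact hα.not_prop_of_lt hlt ⟨hO' hlt.le hα.prop.1, hβ⟩

theorem subset_of_forall_corner_not_linearIndepOn {K V : Type*} [Semiring K] [AddCommMonoid V]
    [Module K V] {v : (Fin d →₀ ℕ) → V} {O' : Set (Fin d →₀ ℕ)} (hO' : IsLowerSet O')
    (hind : LinearIndepOn K v O') (hdep : ∀ α ∈ corner O, ¬ LinearIndepOn K v (Set.Iic α)) :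
    O' ⊆ O := by
  by_contra hsub
  obtain ⟨α, hα⟩ := exists_minimal_of_wellFoundedLT (· ∈ O' \ O) (Set.not_subset.1 hsub)
  exact hdep α (mem_corner_of_minimal hO' hα) (hind.mono fun β hβ => hO' hβ hα.prop.1)

end Corner

section QuotientBasis

open Submodule

variable {F : Type*} [Field F] {d : ℕ} {I : Ideal (MvPolynomial (Fin d) F)}
  {O : Set (Fin d →₀ ℕ)}

theorem isMOQB_iff : IsMOQB I O ↔ O.Finite ∧ IsLowerSet O ∧
    LinearIndepOn F (monomialResidue I) O ∧ span F (monomialResidue I '' O) = ⊤ := by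
  rw [Set.image_eq_range]
  rfl

theorem IsMOQB.finiteDimensional (hO : IsMOQB I O) :
    FiniteDimensional F (MvPolynomial (Fin d) F ⧸ I) :=
  Module.finite_def.2 (fg_def.2 ⟨_, hO.1.image _, (isMOQB_iff.1 hO).2.2.2⟩)

theorem isMOQB_standardExponents [FiniteDimensional F (MvPolynomial (Fin d) F ⧸ I)]
    (m : MonomialOrder (Fin d)) : IsMOQB I (standardExponents I m) :=
  isMOQB_iff.2 ⟨(linearIndepOn_standardExponents I m).finite, isLowerSet_standardExponents I m,
    linearIndepOn_standardExponents I m, span_standardExponents I m⟩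

theorem monomialResidue_mem_span_inter_Iic (hO : IsMOQB I O)
    (hstd : ∀ i, standardExponents I (MonomialOrder.swapLex i) = O) (α : Fin d →₀ ℕ) :
    monomialResidue I α ∈ span F (monomialResidue I '' (O ∩ Set.Iic α)) := by
  obtain ⟨-, -, hind, hspan⟩ := isMOQB_iff.1 hO
  have hIic : O ∩ Set.Iic α = O ∩ ⋂ i, {γ | γ i ≤ α i} := by
    ext γ
    simp [Finsupp.le_def]
  rw [hIic]
  refine hind.mem_span_image_inter_iInter (hspan ▸ mem_top) fun i => ?_
  have hreach := monomialResidue_mem_span_standardExponents I (MonomialOrder.swapLex i) α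
  rw [hstd i] at hreach
  refine span_mono (Set.image_mono fun γ hγ => ?_) hreach
  exact ⟨hγ.1, not_lt.1 fun hlt => (MonomialOrder.swapLex_toSyn_lt i hlt).not_ge hγ.2⟩

end QuotientBasis

theorem stmt1_general {F : Type*} [Field F] {d : ℕ}
    (I : Ideal (MvPolynomial (Fin d) F))
    (O : Set (Fin d →₀ ℕ)) (hO : IsMOQB I O) :
    (∀ O' : Set (Fin d →₀ ℕ), IsMOQB I O' → O' = O) ↔
      ∀ α ∈ corner O,
        ¬ LinearIndependent F (fun β : {β : Fin d →₀ ℕ // β ≤ α} =>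
            Ideal.Quotient.mk I (monomial (β : Fin d →₀ ℕ) (1 : F))) := by
  change _ ↔ ∀ α ∈ corner O, ¬ LinearIndepOn F (monomialResidue I) (Set.Iic α)
  have := hO.finiteDimensional
  constructor
  · intro huniq α hα hind
    have hstd i := huniq _ (isMOQB_standardExponents (I := I) (MonomialOrder.swapLex i))
    refine hind.notMem_span Set.self_mem_Iic (Submodule.span_mono (Set.image_mono ?_)
      (monomialResidue_mem_span_inter_Iic hO hstd α))
    exact fun γ hγ => ⟨hγ.2, fun h => hα.1 (h ▸ hγ.1)⟩
  · intro hdep O' hO'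
    obtain ⟨-, hlow', hind', hspan'⟩ := isMOQB_iff.1 hO'
    refine (isMOQB_iff.1 hO).2.2.1.eq_of_subset_of_subset_span
      (subset_of_forall_corner_not_linearIndepOn hlow' hind' hdep) ?_
    rw [hspan']
    exact Set.subset_univ _

/-- Proposition 3.1. Let `I` be a zero-dimensional ideal and `O` a monomial
order quotient basis for `I`. Then `O` is the unique monomial order quotient basis for `I` iff
for every `x^α` in the corner `C[O]`, the monomials `{x^β : 0 ≤ β ≤ α}` are linearly dependent
modulo `I`. -/
theorem stmt1 {F : Type*} [Field F] [CharZero F] {d : ℕ}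
    (I : Ideal (MvPolynomial (Fin d) F))
    (hzero : FiniteDimensional F (MvPolynomial (Fin d) F ⧸ I))
    (O : Set (Fin d →₀ ℕ)) (hO : IsMOQB I O) :
    (∀ O' : Set (Fin d →₀ ℕ), IsMOQB I O' → O' = O) ↔
      ∀ α ∈ corner O,
        ¬ LinearIndependent F (fun β : {β : Fin d →₀ ℕ // β ≤ α} =>
            Ideal.Quotient.mk I (monomial (β : Fin d →₀ ℕ) (1 : F))) :=
  stmt1_general I O hO
end

section
/- Let I ⊂ F[x_1,...,x_d] be a zero-dimensional ideal, let O be a monomial order quotient basis for I, and suppose that for each 1 ≤ i ≤ d there is an elimination order ≺_i for x_i with Gröbner éscalier N_{≺_i}(I) = O. Then for every monomial x^α in the corner C[O], the set {x^β : 0 ≤ β ≤ α componentwise} is linearly dependent modulo I. -/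
/-!
Reducing `x^α` modulo `I` to the basis `O` gives `f = x^α - g ∈ I` with `g` supported on `O`.
As `O` is the éscalier of every `≺ᵢ`, no leading monomial of `f` lies in `O`, so `x^α` is the
`≺ᵢ`-leading monomial of `f` for every `i`. For an elimination order for `xᵢ`, `x^γ ⪯ x^α`
forces `γᵢ ≤ αᵢ`, hence `f` is a nontrivial relation modulo `I` among the `x^β` with `β ≤ α`.
-/

open MvPolynomial

/-- A monomial order on exponent vectors `Fin d →₀ ℕ`: a linear order in which `0` (i.e. the
monomial `1`) is least and which is compatible with addition of exponents (multiplication of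
monomials). -/
structure MonOrder (d : ℕ) where
  toLinearOrder : LinearOrder (Fin d →₀ ℕ)
  zero_le : ∀ a, toLinearOrder.le 0 a
  add_le_add : ∀ a b c, toLinearOrder.le a b → toLinearOrder.le (a + c) (b + c)

/-- `α` is the exponent of the leading monomial of `f` w.r.t. the monomial order `o`. -/
def MonOrder.IsLM {d : ℕ} {F : Type*} [CommSemiring F] (o : MonOrder d)
    (f : MvPolynomial (Fin d) F) (α : Fin d →₀ ℕ) : Prop :=
  α ∈ f.support ∧ ∀ β ∈ f.support, o.toLinearOrder.le β α
/-- `o` is an elimination order for the variable `x_i`: `x_i` is greater than every monomial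
in the remaining variables. -/
def MonOrder.IsElimFor {d : ℕ} (o : MonOrder d) (i : Fin d) : Prop :=
  ∀ β : Fin d →₀ ℕ, β i = 0 → o.toLinearOrder.lt β (Finsupp.single i 1)
/-- The Gröbner éscalier of an ideal `I` w.r.t. a monomial order `o`: the monomials (exponent
vectors) not divisible by the leading monomial of any nonzero element of `I`. -/
def escalier {d : ℕ} {F : Type*} [CommSemiring F] (o : MonOrder d)
    (I : Ideal (MvPolynomial (Fin d) F)) : Set (Fin d →₀ ℕ) :=
  {m | ∀ f ∈ I, f ≠ 0 → ∀ α, o.IsLM f α → ¬ α ≤ m}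
lemma Finsupp.exists_add_single_add_of_apply_lt {σ : Type*} {α β : σ →₀ ℕ} {i : σ}
    (h : α i < β i) :
    ∃ a c μ : σ →₀ ℕ, a i = 0 ∧ α = a + μ ∧ β = c + Finsupp.single i 1 + μ := by
  refine ⟨α - β ⊓ α, β - β ⊓ α - Finsupp.single i 1, β ⊓ α, by simp [h.le], ?_, ?_⟩
  · exact (tsub_add_cancel_of_le inf_le_right).symm
  · rw [tsub_add_cancel_of_le, tsub_add_cancel_of_le inf_le_left]
    rw [Finsupp.single_le_iff]
    simp only [Finsupp.tsub_apply, Finsupp.inf_apply]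
    omega

namespace MonOrder

variable {d : ℕ} (o : MonOrder d)

lemma exists_isLM {F : Type*} [CommSemiring F] {f : MvPolynomial (Fin d) F} (hf : f ≠ 0) :
    ∃ α, o.IsLM f α :=
  let _ := o.toLinearOrder
  f.support.exists_max_image id (support_nonempty.2 hf)

lemma le_add_left (a b : Fin d →₀ ℕ) : o.toLinearOrder.le b (a + b) := by
  simpa using o.add_le_add 0 a b (o.zero_le a)

lemma add_lt_add_right {a b : Fin d →₀ ℕ} (h : o.toLinearOrder.lt a b) (c : Fin d →₀ ℕ) :
    o.toLinearOrder.lt (a + c) (b + c) := by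
  rw [o.toLinearOrder.lt_iff_le_not_ge] at h ⊢
  refine ⟨o.add_le_add a b c h.1, fun hba => h.2 ?_⟩
  have hab : a = b :=
    add_right_cancel (o.toLinearOrder.le_antisymm _ _ (o.add_le_add a b c h.1) hba)
  exact hab ▸ o.toLinearOrder.le_refl a

lemma IsElimFor.apply_le_of_le {o : MonOrder d} {i : Fin d} (hi : o.IsElimFor i)
    {α β : Fin d →₀ ℕ} (h : o.toLinearOrder.le β α) : β i ≤ α i := by
  by_contra! hlt
  -- Write `α = a + μ`, `β = (c + xᵢ) + μ` with `a i = 0`; then `a ≺ xᵢ ⪯ c + xᵢ` gives `α ≺ β`.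
  obtain ⟨a, c, μ, hai, rfl, rfl⟩ := Finsupp.exists_add_single_add_of_apply_lt hlt
  have hac : o.toLinearOrder.lt a (c + Finsupp.single i 1) :=
    @lt_of_lt_of_le _ o.toLinearOrder.toPreorder _ _ _ (hi a hai) (o.le_add_left _ _)
  exact (o.toLinearOrder.lt_iff_le_not_ge _ _).1 (o.add_lt_add_right hac μ) |>.2 h

end MonOrder

section QuotientMonomials

variable {σ R : Type*} [CommRing R] {I : Ideal (MvPolynomial σ R)}

lemma exists_sub_mem_restrictSupport_of_span_eq_top {O : Set (σ →₀ ℕ)}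
    (hspan : Submodule.span R
      (Set.range fun t : O => Ideal.Quotient.mk I (monomial (t : σ →₀ ℕ) (1 : R))) = ⊤)
    (p : MvPolynomial σ R) : ∃ g ∈ restrictSupport R O, p - g ∈ I := by
  have hmap : (restrictSupport R O).map (Ideal.Quotient.mkₐ R I).toLinearMap = ⊤ := by
    rw [restrictSupport_eq_span, Submodule.map_span, ← hspan, Set.image_image]
    congr 1
    ext
    simp
  obtain ⟨g, hg, hgp⟩ := hmap.ge (Submodule.mem_top (x := Ideal.Quotient.mk I p))
  exact ⟨g, hg, Ideal.Quotient.eq.1 hgp.symm⟩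

lemma not_linearIndependent_mk_monomial_of_mem {S : Set (σ →₀ ℕ)} {f : MvPolynomial σ R}
    (hfI : f ∈ I) (hf : f ≠ 0) (hS : ↑f.support ⊆ S) :
    ¬ LinearIndependent R (fun β : S => Ideal.Quotient.mk I (monomial (β : σ →₀ ℕ) (1 : R))) := by
  classical
  intro hli
  obtain ⟨γ, hγ⟩ := support_nonempty.2 hf
  have hsum : ∑ β ∈ f.support.subtype (· ∈ S),
      coeff (β : σ →₀ ℕ) f • Ideal.Quotient.mk I (monomial (β : σ →₀ ℕ) (1 : R)) = 0 := by
    rw [Finset.sum_subtype_of_mem (fun β => coeff β f • Ideal.Quotient.mk I (monomial β 1)) hS]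
    have hsmul (c : R) (β : σ →₀ ℕ) :
        c • Ideal.Quotient.mk I (monomial β 1) = Ideal.Quotient.mk I (monomial β c) := by
      rw [← Ideal.Quotient.mkₐ_eq_mk (R₁ := R), ← map_smul, smul_monomial, smul_eq_mul, mul_one]
    simp_rw [hsmul, ← map_sum, ← f.as_sum]
    exact Ideal.Quotient.eq_zero_iff_mem.2 hfI
  exact mem_support_iff.1 hγ <|
    linearIndependent_iff'.1 hli _ _ hsum ⟨γ, hS hγ⟩ (Finset.mem_subtype.2 hγ)

end QuotientMonomials

lemma MonOrder.IsLM.notMem_escalier {d : ℕ} {F : Type*} [CommSemiring F] {o : MonOrder d}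
    {I : Ideal (MvPolynomial (Fin d) F)} {f : MvPolynomial (Fin d) F} {α : Fin d →₀ ℕ}
    (h : o.IsLM f α) (hfI : f ∈ I) (hf : f ≠ 0) : α ∉ escalier o I :=
  fun hα => hα f hfI hf α h le_rfl

lemma le_of_mem_support_of_forall_isLM {d : ℕ} {F : Type*} [CommSemiring F]
    {e : Fin d → MonOrder d} (helim : ∀ i, (e i).IsElimFor i) {f : MvPolynomial (Fin d) F}
    {α : Fin d →₀ ℕ} (hLM : ∀ i, (e i).IsLM f α) {γ : Fin d →₀ ℕ} (hγ : γ ∈ f.support) :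
    γ ≤ α :=
  fun i => (helim i).apply_le_of_le ((hLM i).2 γ hγ)

theorem stmt2_general {F : Type*} [Field F] {d : ℕ}
    (I : Ideal (MvPolynomial (Fin d) F))
    (O : Set (Fin d →₀ ℕ)) (hO : IsMOQB I O)
    (e : Fin d → MonOrder d) (helim : ∀ i : Fin d, (e i).IsElimFor i)
    (hesc : ∀ i : Fin d, escalier (e i) I = O) :
    ∀ α ∈ corner O,
      ¬ LinearIndependent F (fun β : {β : Fin d →₀ ℕ // β ≤ α} =>
          Ideal.Quotient.mk I (monomial (β : Fin d →₀ ℕ) (1 : F))) := by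
  intro α hα
  obtain ⟨g, hgO, hfI⟩ := exists_sub_mem_restrictSupport_of_span_eq_top hO.2.2.2 (monomial α 1)
  set f := monomial α (1 : F) - g
  have hgα : coeff α g = 0 := notMem_support_iff.1 fun h => hα.1 (hgO h)
  have hfα : coeff α f = 1 := by simp [f, hgα]
  have hf0 : f ≠ 0 := fun h => by simp [h] at hfα
  have hsupp : ∀ γ ∈ f.support, γ = α ∨ γ ∈ O := fun γ hγ =>
    (Finset.mem_union.1 (support_sub _ _ _ hγ)).imp (fun h => Finset.mem_singleton.1
      (support_monomial_subset h)) (fun h => hgO h)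
  have hLM (i : Fin d) : (e i).IsLM f α := by
    obtain ⟨δ, hδ⟩ := (e i).exists_isLM hf0
    obtain rfl : δ = α := (hsupp δ hδ.1).resolve_right (hesc i ▸ hδ.notMem_escalier hfI hf0)
    exact hδ
  exact not_linearIndependent_mk_monomial_of_mem (S := {β | β ≤ α}) hfI hf0
    fun γ hγ => le_of_mem_support_of_forall_isLM helim hLM hγ

/-- Let `I` be a zero-dimensional ideal, `O` a monomial order quotient basis
for `I`, and suppose for each `i` there is an elimination order `≺ᵢ` for `xᵢ` whose Gröbner
éscalier is `O`. Then for every `x^α` in the corner `C[O]`, the monomials `{x^β : 0 ≤ β ≤ α}`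
are linearly dependent modulo `I`. -/
theorem stmt2 {F : Type*} [Field F] [CharZero F] {d : ℕ}
    (I : Ideal (MvPolynomial (Fin d) F))
    (hzero : FiniteDimensional F (MvPolynomial (Fin d) F ⧸ I))
    (O : Set (Fin d →₀ ℕ)) (hO : IsMOQB I O)
    (e : Fin d → MonOrder d) (helim : ∀ i : Fin d, (e i).IsElimFor i)
    (hesc : ∀ i : Fin d, escalier (e i) I = O) :
    ∀ α ∈ corner O,
      ¬ LinearIndependent F (fun β : {β : Fin d →₀ ℕ // β ≤ α} =>
          Ideal.Quotient.mk I (monomial (β : Fin d →₀ ℕ) (1 : F))) :=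
  stmt2_general I O hO e helim hesc
end

section
/- Let I ⊂ F[x_1,...,x_d] be a zero-dimensional ideal, and for each 1 ≤ i ≤ d let ≺_i be an elimination order for x_i. Then the following are equivalent: (1) I has a unique monomial order quotient basis; (2) for any two monomial orders ≺ and ≺', the Gröbner éscaliers N_≺(I) and N_{≺'}(I) coincide; (3) the d Gröbner éscaliers N_{≺_1}(I), ..., N_{≺_d}(I) are all identical. -/
/-!
A Gröbner éscalier `N_≺(I)` is always a monomial order quotient basis: a nonzero element of `I`
has its leading monomial outside `N_≺(I)`, which gives independence, and division by the nonzero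
elements of `I` leaves a remainder supported on `N_≺(I)`, which gives spanning.

Conversely, suppose `N = N_{≺ᵢ}(I)` for all elimination orders `≺ᵢ` and let `O` be any monomial
order quotient basis. For `u ∈ O \ N`, reduce `x^u` to `r` supported on `N`. Then `x^u - r ∈ I`
has leading monomial `x^u` for every `≺ᵢ`, so each of its monomials has `xᵢ`-degree at most
that of `x^u`, i.e. divides `x^u`, and hence lies in the order ideal `O`. This contradicts the
independence of `O`, so `O ⊆ N`, and both have `dim F[x]/I` elements.
-/

open MvPolynomial

open MonomialOrder

noncomputable section

namespace MonOrder

variable {d : ℕ} (o : MonOrder d)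

def Syn (_ : MonOrder d) : Type := Fin d →₀ ℕ

instance : AddCommMonoid o.Syn := inferInstanceAs (AddCommMonoid (Fin d →₀ ℕ))

instance : LinearOrder o.Syn := o.toLinearOrder

instance : IsOrderedAddMonoid o.Syn where
  add_le_add_left a b h c := o.add_le_add a b c h

theorem le_of_le {a b : Fin d →₀ ℕ} (h : a ≤ b) : o.toLinearOrder.le a b := by
  obtain ⟨c, rfl⟩ := exists_add_of_le h
  simpa [add_comm a] using o.add_le_add 0 c a (o.zero_le c)

instance : WellQuasiOrderedLE o.Syn where
  wqo f :=
    let ⟨m, n, hmn, h⟩ := wellQuasiOrdered_le (α := Fin d →₀ ℕ) f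
    ⟨m, n, hmn, o.le_of_le h⟩

def toMonomialOrder : MonomialOrder (Fin d) where
  syn := o.Syn
  toSyn := AddEquiv.refl _
  toSyn_monotone _ _ := o.le_of_le

theorem toMonomialOrder_lt_iff {a b : Fin d →₀ ℕ} :
    a ≺[o.toMonomialOrder] b ↔ o.toLinearOrder.lt a b := Iff.rfl

def ofMonomialOrder (m : MonomialOrder (Fin d)) : MonOrder d where
  toLinearOrder := LinearOrder.lift' m.toSyn m.toSyn.injective
  zero_le a := show m.toSyn 0 ≤ m.toSyn a by simp
  add_le_add a b c (h : m.toSyn a ≤ m.toSyn b) := show m.toSyn (a + c) ≤ m.toSyn (b + c) by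
    simpa only [map_add] using add_le_add_left h (m.toSyn c)

variable {o} {F : Type*} [CommSemiring F] {f : MvPolynomial (Fin d) F} {α : Fin d →₀ ℕ}

theorem isLM_iff_eq_degree (hf : f ≠ 0) : o.IsLM f α ↔ α = o.toMonomialOrder.degree f := by
  constructor
  · rintro ⟨hα, hmax⟩
    exact o.toMonomialOrder.toSyn.injective <|
      le_antisymm (o.toMonomialOrder.le_degree hα)
        (hmax _ (o.toMonomialOrder.degree_mem_support hf))
  · rintro rfl
    exact ⟨o.toMonomialOrder.degree_mem_support hf, fun β hβ => o.toMonomialOrder.le_degree hβ⟩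

theorem IsElimFor.lt_of_apply_lt {i : Fin d} (h : o.IsElimFor i) {a b : Fin d →₀ ℕ}
    (hab : a i < b i) : a ≺[o.toMonomialOrder] b := by
  set m := o.toMonomialOrder
  have herase : m.toSyn (a.erase i) < m.toSyn (Finsupp.single i 1) :=
    o.toMonomialOrder_lt_iff.2 (h _ Finsupp.erase_same)
  calc m.toSyn a = m.toSyn (a.erase i) + m.toSyn (Finsupp.single i (a i)) := by
        rw [← map_add, Finsupp.erase_add_single]
    _ < m.toSyn (Finsupp.single i 1) + m.toSyn (Finsupp.single i (a i)) := by gcongr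
    _ = m.toSyn (Finsupp.single i (a i + 1)) := by rw [← map_add, ← Finsupp.single_add, add_comm]
    _ ≤ m.toSyn b := m.toSyn_monotone (Finsupp.single_le_iff.2 hab)

theorem IsElimFor.apply_le_of_le_s3 {i : Fin d} (h : o.IsElimFor i) {a b : Fin d →₀ ℕ}
    (hab : a ≼[o.toMonomialOrder] b) : a i ≤ b i :=
  not_lt.1 fun hba => (h.lt_of_apply_lt hba).not_ge hab

theorem le_of_mem_support_of_forall_degree_eq {e : Fin d → MonOrder d}
    (helim : ∀ i, (e i).IsElimFor i) {h : MvPolynomial (Fin d) F} {u : Fin d →₀ ℕ}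
    (hdeg : ∀ i, (e i).toMonomialOrder.degree h = u) {β : Fin d →₀ ℕ} (hβ : β ∈ h.support) :
    β ≤ u :=
  fun i => (helim i).apply_le_of_le_s3 (hdeg i ▸ (e i).toMonomialOrder.le_degree hβ)

end MonOrder

end

section QuotientMonomials

variable {σ R : Type*} [CommRing R] {I : Ideal (MvPolynomial σ R)} {O : Set (σ →₀ ℕ)}

theorem linearIndependent_mk_monomial_iff :
    LinearIndependent R (fun t : O => Ideal.Quotient.mk I (monomial (t : σ →₀ ℕ) (1 : R))) ↔
      ∀ p ∈ I, ↑p.support ⊆ O → p = 0 := by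
  let v : O → MvPolynomial σ R := fun t => monomial t 1
  have hspan : Submodule.span R (Set.range v) = restrictSupport R O := by
    rw [restrictSupport_eq_span, Set.image_eq_range]
  have hv : LinearIndependent R v := by
    have := (basisMonomials σ R).linearIndependent
    rw [coe_basisMonomials] at this
    exact this.comp _ Subtype.val_injective
  have hker : ∀ p, p ∈ LinearMap.ker (Ideal.Quotient.mkₐ R I).toLinearMap ↔ p ∈ I := by
    simp [Ideal.Quotient.eq_zero_iff_mem]
  change LinearIndependent R ((Ideal.Quotient.mkₐ R I).toLinearMap ∘ v) ↔ _
  constructor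
  · intro h p hpI hp
    exact Submodule.disjoint_def.1 (Submodule.range_ker_disjoint h) p (hspan ▸ hp) ((hker p).2 hpI)
  · intro h
    exact hv.map <| Submodule.disjoint_def.2 fun p hp hpI =>
      h p ((hker p).1 hpI) (mem_restrictSupport_iff R |>.1 (hspan ▸ hp))

theorem span_mk_monomial_eq_top (h : ∀ p : MvPolynomial σ R, ∃ r, p - r ∈ I ∧ ↑r.support ⊆ O) :
    Submodule.span R
      (Set.range fun t : O => Ideal.Quotient.mk I (monomial (t : σ →₀ ℕ) (1 : R))) = ⊤ := by
  have hrange : (Set.range fun t : O => Ideal.Quotient.mk I (monomial (t : σ →₀ ℕ) (1 : R))) =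
      (Ideal.Quotient.mkₐ R I).toLinearMap '' ((monomial · 1) '' O) := by
    rw [Set.image_image, Set.image_eq_range]
    rfl
  rw [hrange, Submodule.span_image, ← restrictSupport_eq_span, Submodule.eq_top_iff']
  intro x
  obtain ⟨p, rfl⟩ := Ideal.Quotient.mk_surjective x
  obtain ⟨r, hpr, hr⟩ := h p
  rw [Ideal.Quotient.eq.2 hpr]
  exact Submodule.mem_map_of_mem (p := restrictSupport R O) hr

end QuotientMonomials

section Escalier

variable {d : ℕ} {F : Type*}

theorem mem_escalier_iff [CommSemiring F] {o : MonOrder d} {I : Ideal (MvPolynomial (Fin d) F)}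
    {c : Fin d →₀ ℕ} :
    c ∈ escalier o I ↔ ∀ f ∈ I, f ≠ 0 → ¬ o.toMonomialOrder.degree f ≤ c := by
  refine forall₂_congr fun f _ => forall_congr' fun hf => ?_
  simp only [MonOrder.isLM_iff_eq_degree hf, forall_eq]

theorem isLowerSet_escalier [CommSemiring F] (o : MonOrder d)
    (I : Ideal (MvPolynomial (Fin d) F)) : IsLowerSet (escalier o I) :=
  fun _ _ hba ha f hf h0 α hα hle => ha f hf h0 α hα (hle.trans hba)

variable [Field F] {o : MonOrder d} {I : Ideal (MvPolynomial (Fin d) F)}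

theorem degree_notMem_escalier {f : MvPolynomial (Fin d) F} (hf : f ∈ I) (h0 : f ≠ 0) :
    o.toMonomialOrder.degree f ∉ escalier o I :=
  fun h => mem_escalier_iff.1 h f hf h0 le_rfl

theorem exists_sub_mem_support_subset_escalier (o : MonOrder d)
    (I : Ideal (MvPolynomial (Fin d) F)) (p : MvPolynomial (Fin d) F) :
    ∃ r, p - r ∈ I ∧ ↑r.support ⊆ escalier o I := by
  obtain ⟨g, r, hp, -, hr⟩ := o.toMonomialOrder.div_set (B := {f | f ∈ I ∧ f ≠ 0})
    (fun b hb => MonomialOrder.isUnit_leadingCoeff.2 hb.2) p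
  refine ⟨r, ?_, fun c hc => mem_escalier_iff.2 fun f hf h0 => hr c hc f ⟨hf, h0⟩⟩
  rw [hp, add_sub_cancel_right]
  refine Submodule.span_le.2 ?_ (Finsupp.mem_span_range_iff_exists_finsupp.2 ⟨g, rfl⟩)
  rintro _ ⟨b, rfl⟩
  exact b.2.1

theorem eq_zero_of_mem_of_support_subset_escalier {p : MvPolynomial (Fin d) F} (hp : p ∈ I)
    (hsupp : ↑p.support ⊆ escalier o I) : p = 0 := by
  by_contra h0
  exact degree_notMem_escalier hp h0 (hsupp (o.toMonomialOrder.degree_mem_support h0))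

theorem isMOQB_escalier (o : MonOrder d) (I : Ideal (MvPolynomial (Fin d) F))
    [FiniteDimensional F (MvPolynomial (Fin d) F ⧸ I)] : IsMOQB I (escalier o I) := by
  have hli := (linearIndependent_mk_monomial_iff (I := I)).2 fun _ hp hsupp =>
    eq_zero_of_mem_of_support_subset_escalier (o := o) hp hsupp
  exact ⟨Set.finite_coe_iff.1 hli.finite, isLowerSet_escalier o I, hli,
    span_mk_monomial_eq_top (exists_sub_mem_support_subset_escalier o I)⟩

end Escalier

section Uniqueness

variable {d : ℕ} {F : Type*} [Field F] {I : Ideal (MvPolynomial (Fin d) F)}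

theorem IsMOQB.ncard_eq {O : Set (Fin d →₀ ℕ)} (hO : IsMOQB I O) :
    O.ncard = Module.finrank F (MvPolynomial (Fin d) F ⧸ I) := by
  rw [Module.finrank_eq_nat_card_basis (Module.Basis.mk hO.2.2.1 hO.2.2.2.ge),
    Nat.card_coe_set_eq]

theorem IsMOQB.subset_escalier {e : Fin d → MonOrder d} (helim : ∀ i, (e i).IsElimFor i)
    {o : MonOrder d} (hN : ∀ i, escalier (e i) I = escalier o I) {O : Set (Fin d →₀ ℕ)}
    (hO : IsMOQB I O) : O ⊆ escalier o I := by
  classical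
  intro u huO
  by_contra huN
  obtain ⟨r, hrI, hr⟩ := exists_sub_mem_support_subset_escalier o I (monomial u 1)
  have hsupp : (monomial u (1 : F) - r).support ⊆ insert u r.support := by
    refine (support_sub _ _ _).trans ?_
    rw [support_monomial, if_neg one_ne_zero]
    rfl
  have hu : u ∈ (monomial u (1 : F) - r).support := by
    have : coeff u r = 0 := notMem_support_iff.1 fun h => huN (hr h)
    simp [coeff_sub, this]
  have h0 : monomial u (1 : F) - r ≠ 0 := by rintro h; simp [h] at hu
  have hdeg : ∀ i, (e i).toMonomialOrder.degree (monomial u (1 : F) - r) = u := by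
    intro i
    rcases Finset.mem_insert.1 (hsupp ((e i).toMonomialOrder.degree_mem_support h0)) with h | h
    · exact h
    · exact absurd ((hN i).symm ▸ hr h) (degree_notMem_escalier hrI h0)
  refine h0 (linearIndependent_mk_monomial_iff.1 hO.2.2.1 _ hrI fun β hβ => ?_)
  exact hO.2.1 (MonOrder.le_of_mem_support_of_forall_degree_eq helim hdeg hβ) huO

theorem IsMOQB.eq_escalier [FiniteDimensional F (MvPolynomial (Fin d) F ⧸ I)]
    {e : Fin d → MonOrder d} (helim : ∀ i, (e i).IsElimFor i) {o : MonOrder d}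
    (hN : ∀ i, escalier (e i) I = escalier o I) {O : Set (Fin d →₀ ℕ)} (hO : IsMOQB I O) :
    O = escalier o I :=
  have hNO := isMOQB_escalier o I
  Set.eq_of_subset_of_ncard_le (hO.subset_escalier helim hN) (by rw [hO.ncard_eq, hNO.ncard_eq])
    hNO.1

end Uniqueness

theorem stmt3_general {F : Type*} [Field F] {d : ℕ}
    (I : Ideal (MvPolynomial (Fin d) F))
    (hzero : FiniteDimensional F (MvPolynomial (Fin d) F ⧸ I))
    (e : Fin d → MonOrder d) (helim : ∀ i : Fin d, (e i).IsElimFor i) :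
    List.TFAE
      [∃! O : Set (Fin d →₀ ℕ), IsMOQB I O,
       ∀ o o' : MonOrder d, escalier o I = escalier o' I,
       ∀ i j : Fin d, escalier (e i) I = escalier (e j) I] := by
  tfae_have 1 → 2 := fun ⟨_, _, huniq⟩ o o' =>
    (huniq _ (isMOQB_escalier o I)).trans (huniq _ (isMOQB_escalier o' I)).symm
  tfae_have 2 → 3 := fun h2 i j => h2 (e i) (e j)
  tfae_have 3 → 1 := by
    intro h3
    obtain ⟨o, hN⟩ : ∃ o : MonOrder d, ∀ i, escalier (e i) I = escalier o I := by
      cases d with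
      | zero => exact ⟨.ofMonomialOrder .lex, fun i => i.elim0⟩
      | succ n => exact ⟨e 0, fun i => h3 i 0⟩
    exact ⟨escalier o I, isMOQB_escalier o I, fun O hO => hO.eq_escalier helim hN⟩
  tfae_finish

/-- Theorem 3.1. Let `I` be a zero-dimensional ideal and, for each `i`, let
`≺ᵢ` be an elimination order for `xᵢ`. The following are equivalent: (1) `I` has a unique
monomial order quotient basis; (2) any two monomial orders yield the same Gröbner éscalier of
`I`; (3) the `d` Gröbner éscaliers of `I` w.r.t. `≺₁, …, ≺_d` are all identical. -/
theorem stmt3 {F : Type*} [Field F] [CharZero F] {d : ℕ}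
    (I : Ideal (MvPolynomial (Fin d) F))
    (hzero : FiniteDimensional F (MvPolynomial (Fin d) F ⧸ I))
    (e : Fin d → MonOrder d) (helim : ∀ i : Fin d, (e i).IsElimFor i) :
    List.TFAE
      [∃! O : Set (Fin d →₀ ℕ), IsMOQB I O,
       ∀ o o' : MonOrder d, escalier o I = escalier o' I,
       ∀ i j : Fin d, escalier (e i) I = escalier (e j) I] :=
  stmt3_general I hzero e helim
end

section
/- Let Ξ ⊂ F^d, d ≥ 2, be a finite set of distinct points, and for each 1 ≤ i ≤ d let v_{i,0},...,v_{i,m_i} be the distinct values of the i-th coordinates of points of Ξ, and for 0 ≤ j ≤ m_i let L_{i,j}(Ξ) ⊂ F^{d-1} be the set of (d−1)-tuples obtained by deleting the i-th coordinate from those points of Ξ whose i-th coordinate equals v_{i,j}. Then Ξ is a Cartesian set if and only if for each 1 ≤ i ≤ d the values v_{i,0},...,v_{i,m_i} can be ordered so that L_{i,0}(Ξ) ⊇ L_{i,1}(Ξ) ⊇ ... ⊇ L_{i,m_i}(Ξ). -/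
/-!
If `Ξ` is `A`-Cartesian along `y`, lowering the `i`-th index of a point of `A` keeps it in `A`,
so the slices at `y i 0, y i 1, …` decrease. Conversely, enumerate the values of each coordinate
in order of decreasing slice size and continue with fresh values of the (infinite) field. As the
slices are totally ordered by inclusion, size order is inclusion order, so
`A = {α | (y i (α i))ᵢ ∈ Ξ}` is closed under lowering a single coordinate, hence a lower set.
-/

open MvPolynomial

/-- `Ξ` is the `A`-Cartesian set determined by the lower set `A ⊆ ℕ^d` and the injective
functions `y i : ℕ → F`. -/
def IsCartesianWith {d : ℕ} {F : Type*} (A : Set (Fin d → ℕ)) (y : Fin d → ℕ → F)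
    (Ξ : Set (Fin d → F)) : Prop :=
  IsLowerSet A ∧ (∀ i, Function.Injective (y i)) ∧
  Ξ = (fun α : Fin d → ℕ => fun i => y i (α i)) '' A

/-- `Ξ` is a Cartesian set. -/
def IsCartesian {d : ℕ} {F : Type*} (Ξ : Set (Fin d → F)) : Prop :=
  ∃ (A : Set (Fin d → ℕ)) (y : Fin d → ℕ → F), IsCartesianWith A y Ξ

open Function Finset

theorem Set.subset_of_total_of_ncard_le {α : Type*} {s t : Set α} (h : s ⊆ t ∨ t ⊆ s)
    (hcard : t.ncard ≤ s.ncard) (ht : t.Finite) : t ⊆ s :=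
  h.elim (fun hst => (Set.eq_of_subset_of_ncard_le hst hcard ht).symm.subset) id

theorem isLowerSet_of_update_mem {ι : Type*} [Fintype ι] [DecidableEq ι] {α : ι → Type*}
    [∀ i, Preorder (α i)] {A : Set (∀ i, α i)}
    (h : ∀ a ∈ A, ∀ i b, b ≤ a i → update a i b ∈ A) : IsLowerSet A := by
  intro a b hba ha
  have key : ∀ S : Finset ι, S.piecewise b a ∈ A := by
    intro S
    induction S using Finset.induction_on with
    | empty => simpa using ha
    | insert i S hi ih =>
      rw [piecewise_insert]
      exact h _ ih i (b i) (by simpa [piecewise_eq_of_notMem _ _ _ hi] using hba i)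
  simpa using key univ

theorem Finset.exists_equivFin_antitone {F β : Type*} [LinearOrder β] (s : Finset F)
    (f : F → β) : ∃ z : Fin #s ≃ s, Antitone fun k => f (z k) := by
  let g : Fin #s → βᵒᵈ := fun k => OrderDual.toDual (f (s.equivFin.symm k))
  exact ⟨(Tuple.sort g).trans s.equivFin.symm, monotone_toDual_comp_iff.1 (Tuple.monotone_sort g)⟩

theorem Finset.exists_injective_enum_antitone {F β : Type*} [Infinite F] [LinearOrder β]
    (s : Finset F) (f : F → β) :
    ∃ y : ℕ → F, Injective y ∧ (s : Set F) ⊆ Set.range y ∧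
      ∀ ⦃j k⦄, j ≤ k → y k ∈ s → y j ∈ s ∧ f (y k) ≤ f (y j) := by
  obtain ⟨z, hz⟩ := s.exists_equivFin_antitone f
  let c : ℕ ↪ ((s : Set F)ᶜ : Set F) := s.finite_toSet.infinite_compl.natEmbedding
  have hc : ∀ m, (c m : F) ∉ s := fun m => (c m).2
  let y : ℕ → F := fun j => if h : j < #s then z ⟨j, h⟩ else c (j - #s)
  have hy_mem : ∀ j, y j ∈ s ↔ j < #s := fun j => by
    by_cases h : j < #s <;> simp [y, h, hc]
  refine ⟨y, ?_, fun v hv => ⟨z.symm ⟨v, hv⟩, by simp [y]⟩, fun j k hjk hk => ?_⟩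
  · refine Injective.dite (fun j => j < #s) (f := fun j => (z ⟨j, j.2⟩ : F))
      (f' := fun j => (c (j - #s) : F)) ?_ ?_ fun h => hc _ (h ▸ (z _).2)
    · exact fun j k hjk => Subtype.ext (Fin.mk.inj_iff.1 (z.injective (Subtype.ext hjk)))
    · intro j k hjk
      have := c.injective (Subtype.ext hjk)
      exact Subtype.ext (by omega)
  · have hk' := (hy_mem k).1 hk
    have hj' := hjk.trans_lt hk'
    refine ⟨(hy_mem j).2 hj', ?_⟩
    simpa [y, hk', hj'] using hz (Fin.mk_le_mk.2 hjk : (⟨j, hj'⟩ : Fin #s) ≤ ⟨k, hk'⟩)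

/-- The paper's `L_{i,j}(Ξ)`, indexed by the coordinate value `v = v_{i,j}` rather than by `j`. -/
def coordSlice {n : ℕ} {F : Type*} (Ξ : Set (Fin (n + 1) → F)) (i : Fin (n + 1)) (v : F) :
    Set (Fin n → F) :=
  i.removeNth '' {ξ ∈ Ξ | ξ i = v}

theorem removeNth_mem_coordSlice_iff {n : ℕ} {F : Type*} {Ξ : Set (Fin (n + 1) → F)}
    {i : Fin (n + 1)} {v : F} {ξ : Fin (n + 1) → F} :
    i.removeNth ξ ∈ coordSlice Ξ i v ↔ update ξ i v ∈ Ξ := by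
  constructor
  · rintro ⟨ζ, ⟨hζ, rfl⟩, hrem⟩
    rwa [← Fin.insertNth_removeNth, ← hrem, Fin.insertNth_self_removeNth]
  · intro h
    exact ⟨_, ⟨h, update_self ..⟩, Fin.removeNth_update ..⟩

theorem update_mem_of_coordSlice_subset {n : ℕ} {F : Type*} {Ξ : Set (Fin (n + 1) → F)}
    {i : Fin (n + 1)} {v : F} {ξ : Fin (n + 1) → F} (hξ : ξ ∈ Ξ)
    (h : coordSlice Ξ i (ξ i) ⊆ coordSlice Ξ i v) : update ξ i v ∈ Ξ :=
  removeNth_mem_coordSlice_iff.1 (h ⟨ξ, ⟨hξ, rfl⟩, rfl⟩)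

theorem IsCartesianWith.update_mem {d : ℕ} {F : Type*} {A : Set (Fin d → ℕ)}
    {y : Fin d → ℕ → F} {Ξ : Set (Fin d → F)} (h : IsCartesianWith A y Ξ) {α : Fin d → ℕ}
    (hα : α ∈ A) (i : Fin d) {j : ℕ} (hj : j ≤ α i) :
    update (fun t => y t (α t)) i (y i j) ∈ Ξ := by
  rw [h.2.2]
  refine ⟨update α i j, h.1 (update_le_iff.2 ⟨hj, fun _ _ => le_rfl⟩) hα, ?_⟩
  funext t
  exact apply_update y α i j t

theorem IsCartesianWith.coordSlice_antitone {n : ℕ} {F : Type*} {A : Set (Fin (n + 1) → ℕ)}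
    {y : Fin (n + 1) → ℕ → F} {Ξ : Set (Fin (n + 1) → F)} (h : IsCartesianWith A y Ξ)
    (i : Fin (n + 1)) : Antitone fun k => coordSlice Ξ i (y i k) := by
  rintro j k hjk _ ⟨ξ, ⟨hξ, hξi⟩, rfl⟩
  rw [h.2.2] at hξ
  obtain ⟨α, hα, rfl⟩ := hξ
  have hαi : α i = k := h.2.1 i hξi
  exact removeNth_mem_coordSlice_iff.2 (h.update_mem hα i (hαi ▸ hjk))

theorem IsCartesian.coordSlice_total {n : ℕ} {F : Type*} {Ξ : Set (Fin (n + 1) → F)}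
    (h : IsCartesian Ξ) (i : Fin (n + 1)) :
    ∀ v ∈ (fun ξ : Fin (n + 1) → F => ξ i) '' Ξ, ∀ w ∈ (fun ξ : Fin (n + 1) → F => ξ i) '' Ξ,
      coordSlice Ξ i v ⊆ coordSlice Ξ i w ∨ coordSlice Ξ i w ⊆ coordSlice Ξ i v := by
  obtain ⟨A, y, hAy⟩ := h
  rintro _ ⟨_, hv, rfl⟩ _ ⟨_, hw, rfl⟩
  rw [hAy.2.2] at hv hw
  obtain ⟨α, -, rfl⟩ := hv
  obtain ⟨β, -, rfl⟩ := hw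
  exact (le_total (β i) (α i)).imp (fun hle => hAy.coordSlice_antitone i hle)
    (fun hle => hAy.coordSlice_antitone i hle)

theorem isCartesian_of_coordSlice_total {n : ℕ} {F : Type*} [Infinite F]
    {Ξ : Set (Fin (n + 1) → F)} (hfin : Ξ.Finite)
    (h : ∀ i, ∀ v ∈ (fun ξ : Fin (n + 1) → F => ξ i) '' Ξ,
      ∀ w ∈ (fun ξ : Fin (n + 1) → F => ξ i) '' Ξ,
        coordSlice Ξ i v ⊆ coordSlice Ξ i w ∨ coordSlice Ξ i w ⊆ coordSlice Ξ i v) :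
    IsCartesian Ξ := by
  choose y hy_inj hy_range hy_anti using fun i =>
    (hfin.image fun ξ : Fin (n + 1) → F => ξ i).toFinset.exists_injective_enum_antitone
      fun v => (coordSlice Ξ i v).ncard
  simp only [Set.Finite.coe_toFinset, Set.Finite.mem_toFinset] at hy_range hy_anti
  refine ⟨{α | (fun t => y t (α t)) ∈ Ξ}, y, isLowerSet_of_update_mem ?_, hy_inj, ?_⟩
  · intro α hα i j hj
    obtain ⟨hj_mem, hcard⟩ := hy_anti i hj ⟨_, hα, rfl⟩
    have hsub : coordSlice Ξ i (y i (α i)) ⊆ coordSlice Ξ i (y i j) :=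
      Set.subset_of_total_of_ncard_le (h i _ hj_mem _ ⟨_, hα, rfl⟩) hcard
        ((hfin.subset (Set.sep_subset _ _)).image _)
    change (fun t => y t (update α i j t)) ∈ Ξ
    rw [funext (apply_update y α i j)]
    exact update_mem_of_coordSlice_subset hα hsub
  · ext ξ
    refine ⟨fun hξ => ?_, fun ⟨α, hα, hξ⟩ => hξ ▸ hα⟩
    choose α hα using fun t => hy_range t ⟨ξ, hξ, rfl⟩
    exact ⟨α, by simpa [hα] using hξ, funext hα⟩

theorem stmt7_general {F : Type*} [Field F] [CharZero F] {n : ℕ}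
    (Ξ : Set (Fin (n + 1) → F)) (hfin : Ξ.Finite) :
    IsCartesian Ξ ↔
      ∀ i : Fin (n + 1),
        ∀ v ∈ (fun ξ : Fin (n + 1) → F => ξ i) '' Ξ,
          ∀ w ∈ (fun ξ : Fin (n + 1) → F => ξ i) '' Ξ,
            i.removeNth '' {ξ ∈ Ξ | ξ i = v} ⊆ i.removeNth '' {ξ ∈ Ξ | ξ i = w} ∨
            i.removeNth '' {ξ ∈ Ξ | ξ i = w} ⊆ i.removeNth '' {ξ ∈ Ξ | ξ i = v} :=
  ⟨IsCartesian.coordSlice_total, isCartesian_of_coordSlice_total hfin⟩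

/-- Theorem 3.2. A finite set of distinct points `Ξ ⊆ F^d` (`d = n+1 ≥ 2`) is
Cartesian iff for each coordinate direction `i`, the slices of `Ξ` (the sets of `(d-1)`-tuples
obtained by deleting the `i`-th coordinate from the points of `Ξ` with a fixed `i`-th coordinate
value) are totally ordered by inclusion, i.e. can be ordered decreasingly
`L_{i,0}(Ξ) ⊇ ⋯ ⊇ L_{i,mᵢ}(Ξ)`. -/
theorem stmt7 {F : Type*} [Field F] [CharZero F] {n : ℕ} (hn : 1 ≤ n)
    (Ξ : Set (Fin (n + 1) → F)) (hfin : Ξ.Finite) :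
    IsCartesian Ξ ↔
      ∀ i : Fin (n + 1),
        ∀ v ∈ (fun ξ : Fin (n + 1) → F => ξ i) '' Ξ,
          ∀ w ∈ (fun ξ : Fin (n + 1) → F => ξ i) '' Ξ,
            i.removeNth '' {ξ ∈ Ξ | ξ i = v} ⊆ i.removeNth '' {ξ ∈ Ξ | ξ i = w} ∨
            i.removeNth '' {ξ ∈ Ξ | ξ i = w} ⊆ i.removeNth '' {ξ ∈ Ξ | ξ i = v} :=
  stmt7_general Ξ hfin
end

section
/- For every d ≥ 3 there exists a finite set Ξ ⊂ F^d of distinct points which is not a Cartesian set but whose vanishing ideal I(Ξ) has a unique monomial order quotient basis. -/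
open MvPolynomial

/-- The vanishing ideal of a point set `Ξ ⊆ F^d`. -/
noncomputable def vanishIdeal {d : ℕ} {F : Type*} [Field F] (Ξ : Set (Fin d → F)) :
    Ideal (MvPolynomial (Fin d) F) :=
  ⨅ ξ ∈ Ξ, RingHom.ker (MvPolynomial.eval ξ)
/-!
Take three distinct coordinates `i, j, k` and `Ξ = {0, e_k, e_j, e_i + e_k}`. On a point with
coordinates in `{0, 1}` a monomial `x^t` only sees its support, so modulo `I(Ξ)` every monomial
is `0` or congruent to one of `1, x_i, x_j, x_k` dividing it. Hence every order ideal whose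
monomials are independent modulo `I(Ξ)` lies in `{1, x_i, x_j, x_k}`, which is itself a quotient
basis, so it is the only one.

If `Ξ` were Cartesian with lower set `A`, then `|A| = 4`, and `0, e_i, e_j, e_k ∈ A` because
each of the coordinates `i, j, k` takes two values on `Ξ`; so `A = {0, e_i, e_j, e_k}`. But the
preimages of `e_j` and `e_i + e_k` differ in three coordinates, and no two elements of
`{0, e_i, e_j, e_k}` do.
-/

open Set Submodule

theorem LinearIndepOn.eq_of_subset_of_span_eq_top {R M ι : Type*} [Ring R] [Nontrivial R]
    [AddCommGroup M] [Module R M] {v : ι → M} {s t : Set ι} (ht : LinearIndepOn R v t)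
    (hst : s ⊆ t) (hs : span R (v '' s) = ⊤) : s = t := by
  refine hst.antisymm fun b hb => ?_
  by_contra hbs
  refine ht.notMem_span hb (span_mono (image_mono fun x hx => ?_) (hs ▸ mem_top))
  exact ⟨hst hx, fun hxb => hbs (hxb ▸ hx)⟩

theorem LinearIndepOn.insert_of_dual {K V ι : Type*} [Field K] [AddCommGroup V] [Module K V]
    {v : ι → V} {s : Set ι} {x : ι} (hs : LinearIndepOn K v s) (φ : V →ₗ[K] K) {f : ι → K}
    (hφ : ∀ y, φ (v y) = f y) (hx : f x ≠ 0) (hf : ∀ y ∈ s, f y = 0) :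
    LinearIndepOn K v (insert x s) := by
  refine hs.insert fun hmem => hx ?_
  have hle : span K (v '' s) ≤ LinearMap.ker φ :=
    span_le.mpr (by rintro _ ⟨y, hy, rfl⟩; exact (hφ y).trans (hf y hy))
  exact (hφ x).symm.trans (hle hmem)

theorem Finsupp.eq_zero_or_eq_single_of_le_single_one {ι : Type*} {s : ι →₀ ℕ} {c : ι}
    (h : s ≤ single c 1) : s = 0 ∨ s = single c 1 := by
  have hs : s = single c (s c) := by
    ext x
    by_cases hx : x = c
    · rw [hx, single_eq_same]
    · have := h x
      rw [single_eq_of_ne hx] at this ⊢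
      omega
  have hsc : s c ≤ 1 := by simpa using h c
  interval_cases hc : s c
  · exact Or.inl (by rw [hs, single_zero])
  · exact Or.inr hs

section QuotientBasis

variable {d : ℕ} {F : Type*} [Field F] {I : Ideal (MvPolynomial (Fin d) F)}
  {B O : Set (Fin d →₀ ℕ)}

variable (I) in
noncomputable def monomialClass (t : Fin d →₀ ℕ) : MvPolynomial (Fin d) F ⧸ I :=
  Ideal.Quotient.mk I (monomial t 1)

variable (I B) in
def ReducesBelow : Prop :=
  ∀ t ∉ B, monomialClass I t = 0 ∨ ∃ s < t, monomialClass I t = monomialClass I s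

theorem monomialClass_mem_span_of_reducesBelow (h : ReducesBelow I B) (t : Fin d →₀ ℕ) :
    monomialClass I t ∈ span F (monomialClass I '' B) := by
  induction t using WellFoundedLT.induction with
  | _ t ih =>
    by_cases ht : t ∈ B
    · exact subset_span (mem_image_of_mem _ ht)
    rcases h t ht with h0 | ⟨s, hst, hs⟩
    · exact h0 ▸ zero_mem _
    · exact hs ▸ ih s hst

theorem span_monomialClass_eq_top (h : ReducesBelow I B) :
    span F (monomialClass I '' B) = ⊤ := by
  refine eq_top_iff'.mpr fun q => ?_
  obtain ⟨p, rfl⟩ := Ideal.Quotient.mk_surjective q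
  induction p using MvPolynomial.induction_on' with
  | monomial t a =>
    have hmk : Ideal.Quotient.mk I (monomial t a) = a • monomialClass I t := by
      rw [monomialClass, ← Ideal.Quotient.mkₐ_eq_mk F, ← map_smul, smul_monomial, smul_eq_mul,
        mul_one]
    exact hmk ▸ smul_mem _ a (monomialClass_mem_span_of_reducesBelow h t)
  | add p q hp hq => exact map_add (Ideal.Quotient.mk I) p q ▸ add_mem hp hq

theorem subset_of_reducesBelow (h : ReducesBelow I B) (hlow : IsLowerSet O)
    (hind : LinearIndepOn F (monomialClass I) O) : O ⊆ B := by
  intro t htO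
  by_contra htB
  rcases h t htB with h0 | ⟨s, hst, hs⟩
  · exact hind.ne_zero htO h0
  · exact hst.ne (hind.injOn (hlow hst.le htO) htO hs.symm)

theorem existsUnique_isMOQB_of_reducesBelow (hfin : B.Finite) (hlow : IsLowerSet B)
    (hind : LinearIndepOn F (monomialClass I) B) (hred : ReducesBelow I B) :
    ∃! O, IsMOQB I O := by
  have hspan := span_monomialClass_eq_top hred
  rw [image_eq_range] at hspan
  refine ⟨B, ⟨hfin, hlow, hind, hspan⟩, fun O ⟨_, hlowO, hindO, hspanO⟩ => ?_⟩
  exact hind.eq_of_subset_of_span_eq_top (subset_of_reducesBelow hred hlowO hindO)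
    (by rw [image_eq_range]; exact hspanO)

end QuotientBasis

section ZeroOnePoints

variable {d : ℕ} {F : Type*} [Field F]

theorem mem_vanishIdeal_iff {Ξ : Set (Fin d → F)} {f : MvPolynomial (Fin d) F} :
    f ∈ vanishIdeal Ξ ↔ ∀ ξ ∈ Ξ, eval ξ f = 0 := by
  simp [vanishIdeal, RingHom.mem_ker]

variable (F) in
def charVec (S : Finset (Fin d)) : Fin d → F := fun c => if c ∈ S then 1 else 0

theorem eval_charVec_monomial (S : Finset (Fin d)) (t : Fin d →₀ ℕ) :
    eval (charVec F S) (monomial t 1) = if t.support ⊆ S then 1 else 0 := by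
  rw [eval_monomial, one_mul]
  split_ifs with h
  · exact Finset.prod_eq_one fun c hc => by simp [charVec, h hc]
  · obtain ⟨c, hct, hcS⟩ := Finset.not_subset.mp h
    exact Finset.prod_eq_zero hct (by simp [charVec, hcS, Finsupp.mem_support_iff.mp hct])

variable {𝒮 : Set (Finset (Fin d))}

theorem monomialClass_charVec_eq_zero {t : Fin d →₀ ℕ} (h : ∀ S ∈ 𝒮, ¬ t.support ⊆ S) :
    monomialClass (vanishIdeal (charVec F '' 𝒮)) t = 0 := by
  refine Ideal.Quotient.eq_zero_iff_mem.mpr (mem_vanishIdeal_iff.mpr ?_)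
  rintro _ ⟨S, hS, rfl⟩
  simp [eval_charVec_monomial, h S hS]

theorem monomialClass_charVec_eq {t s : Fin d →₀ ℕ}
    (h : ∀ S ∈ 𝒮, (t.support ⊆ S ↔ s.support ⊆ S)) :
    monomialClass (vanishIdeal (charVec F '' 𝒮)) t = monomialClass _ s := by
  refine Ideal.Quotient.eq.mpr (mem_vanishIdeal_iff.mpr ?_)
  rintro _ ⟨S, hS, rfl⟩
  simp [eval_charVec_monomial, h S hS]

variable (F) in
noncomputable def evalCharVec {S : Finset (Fin d)} (hS : S ∈ 𝒮) :
    (MvPolynomial (Fin d) F ⧸ vanishIdeal (charVec F '' 𝒮)) →ₗ[F] F :=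
  (Ideal.Quotient.liftₐ _ (aeval (charVec F S))
    fun _ hf => mem_vanishIdeal_iff.mp hf _ (mem_image_of_mem _ hS)).toLinearMap

theorem evalCharVec_monomialClass {S : Finset (Fin d)} (hS : S ∈ 𝒮) (t : Fin d →₀ ℕ) :
    evalCharVec F hS (monomialClass _ t) = if t.support ⊆ S then 1 else 0 :=
  eval_charVec_monomial S t

end ZeroOnePoints

section FourPoints

variable {d : ℕ} {i j k : Fin d}

-- the supports of the points `0, e_k, e_j, e_i + e_k` of `Ξ`
def fourPointSupports (i j k : Fin d) : Set (Finset (Fin d)) := {∅, {k}, {j}, {i, k}}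

def linearExponents (i j k : Fin d) : Set (Fin d →₀ ℕ) :=
  {0, Finsupp.single j 1, Finsupp.single k 1, Finsupp.single i 1}

theorem isLowerSet_linearExponents : IsLowerSet (linearExponents i j k) := by
  rintro a b hba (rfl | rfl | rfl | rfl)
  · exact Or.inl (nonpos_iff_eq_zero.mp hba)
  all_goals rcases Finsupp.eq_zero_or_eq_single_of_le_single_one hba with rfl | rfl <;>
    simp [linearExponents]

theorem linearIndepOn_linearExponents {F : Type*} [Field F] (hij : i ≠ j) (hik : i ≠ k)
    (hjk : j ≠ k) :
    LinearIndepOn F (monomialClass (vanishIdeal (charVec F '' fourPointSupports i j k)))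
      (linearExponents i j k) := by
  rw [linearExponents, ← LawfulSingleton.insert_empty_eq]
  -- insert `x_i, x_k, x_j, 1` in turn, each separated from the previous ones by evaluation at
  -- `e_i + e_k, e_k, e_j, 0` respectively
  refine .insert_of_dual (.insert_of_dual (.insert_of_dual (.insert_of_dual
    (linearIndepOn_empty F _)
    _ (evalCharVec_monomialClass (S := {i, k}) (by simp [fourPointSupports])) ?_ ?_)
    _ (evalCharVec_monomialClass (S := {k}) (by simp [fourPointSupports])) ?_ ?_)
    _ (evalCharVec_monomialClass (S := {j}) (by simp [fourPointSupports])) ?_ ?_)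
    _ (evalCharVec_monomialClass (S := ∅) (by simp [fourPointSupports])) ?_ ?_ <;>
  simp [hij, hik, hjk.symm]

theorem forall_not_subset_or_exists_subset_iff_mem {T : Finset (Fin d)} (hT : T.Nonempty)
    (hij : i ≠ j) (hik : i ≠ k) :
    (∀ S ∈ fourPointSupports i j k, ¬ T ⊆ S) ∨
      ∃ c ∈ T, (c = i ∨ c = j ∨ c = k) ∧ ∀ S ∈ fourPointSupports i j k, (T ⊆ S ↔ c ∈ S) := by
  have singleton_cases : ∀ c, T = {c} → ∀ S ∈ fourPointSupports i j k, (T ⊆ S ↔ c ∈ S) := by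
    rintro c rfl S -
    exact Finset.singleton_subset_iff
  by_cases hj : T ⊆ {j}
  · exact Or.inr ⟨j, by simp [hT.subset_singleton_iff.mp hj], by simp,
      singleton_cases j (hT.subset_singleton_iff.mp hj)⟩
  by_cases hk : T ⊆ {k}
  · exact Or.inr ⟨k, by simp [hT.subset_singleton_iff.mp hk], by simp,
      singleton_cases k (hT.subset_singleton_iff.mp hk)⟩
  by_cases hik' : T ⊆ {i, k}
  · have hi : i ∈ T := by_contra fun hi => hk ((Finset.subset_insert_iff_of_notMem hi).mp hik')
    refine Or.inr ⟨i, hi, Or.inl rfl, ?_⟩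
    simp [fourPointSupports, hT.ne_empty, hj, hk, hik', hij, hik]
  · left
    simp [fourPointSupports, hT.ne_empty, hj, hk, hik']

theorem reducesBelow_linearExponents {F : Type*} [Field F] (hij : i ≠ j) (hik : i ≠ k) :
    ReducesBelow (vanishIdeal (charVec F '' fourPointSupports i j k)) (linearExponents i j k) := by
  intro t ht
  have hsupp : t.support.Nonempty :=
    Finsupp.support_nonempty_iff.mpr (by rintro rfl; exact ht (Or.inl rfl))
  rcases forall_not_subset_or_exists_subset_iff_mem hsupp hij hik with h0 | ⟨c, hct, hc, hiff⟩
  · exact Or.inl (monomialClass_charVec_eq_zero h0)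
  refine Or.inr ⟨Finsupp.single c 1, lt_of_le_of_ne ?_ ?_, monomialClass_charVec_eq ?_⟩
  · exact Finsupp.single_le_iff.mpr (Nat.one_le_iff_ne_zero.mpr (Finsupp.mem_support_iff.mp hct))
  · rintro rfl
    rcases hc with rfl | rfl | rfl <;> simp [linearExponents] at ht
  · intro S hS
    rw [hiff S hS, Finsupp.support_single _ one_ne_zero, Finset.singleton_subset_iff]

theorem existsUnique_isMOQB_fourPoints {F : Type*} [Field F] (hij : i ≠ j) (hik : i ≠ k)
    (hjk : j ≠ k) :
    ∃! O, IsMOQB (vanishIdeal (charVec F '' fourPointSupports i j k)) O :=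
  existsUnique_isMOQB_of_reducesBelow (by simp [linearExponents]) isLowerSet_linearExponents
    (linearIndepOn_linearExponents hij hik hjk) (reducesBelow_linearExponents hij hik)

end FourPoints

section LowerSets

variable {d : ℕ} {A : Set (Fin d → ℕ)}

theorem IsLowerSet.single_one_mem (hA : IsLowerSet A) {α : Fin d → ℕ} (hα : α ∈ A) {c : Fin d}
    (hc : α c ≠ 0) : Pi.single c 1 ∈ A := by
  refine hA (fun x => ?_) hα
  by_cases hx : x = c
  · subst hx
    simpa using Nat.one_le_iff_ne_zero.mpr hc
  · simp [hx]

theorem ncard_zero_insert_single_one {i j k : Fin d} (hij : i ≠ j) (hik : i ≠ k) (hjk : j ≠ k) :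
    ({0, Pi.single i 1, Pi.single j 1, Pi.single k 1} : Set (Fin d → ℕ)).ncard = 4 := by
  have hne : ∀ a b : Fin d, a ≠ b → (Pi.single a 1 : Fin d → ℕ) ≠ Pi.single b 1 :=
    fun a b h e => by simpa [h] using congrFun e a
  rw [Set.ncard_insert_of_notMem, Set.ncard_insert_of_notMem, Set.ncard_pair (hne j k hjk)]
  · simp [hne _ _ hij, hne _ _ hik]
  · simp [eq_comm (a := (0 : Fin d → ℕ))]

theorem IsLowerSet.four_lt_ncard (hA : IsLowerSet A) (hfin : A.Finite) {α β : Fin d → ℕ}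
    (hα : α ∈ A) (hβ : β ∈ A) {i j k : Fin d} (hij : i ≠ j) (hik : i ≠ k) (hjk : j ≠ k)
    (hi : α i ≠ β i) (hj : α j ≠ β j) (hk : α k ≠ β k) : 4 < A.ncard := by
  have hsingle : ∀ c, α c ≠ β c → Pi.single c 1 ∈ A := fun c hc => by
    by_cases hαc : α c = 0
    · exact hA.single_one_mem hβ (hαc ▸ hc).symm
    · exact hA.single_one_mem hα hαc
  by_contra hle
  have hA_eq : {0, Pi.single i 1, Pi.single j 1, Pi.single k 1} = A := by
    refine Set.eq_of_subset_of_ncard_le ?_ ?_ hfin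
    · rintro _ (rfl | rfl | rfl | rfl)
      exacts [hA (fun _ => Nat.zero_le _) hα, hsingle i hi, hsingle j hj, hsingle k hk]
    · rw [ncard_zero_insert_single_one hij hik hjk]
      omega
  rw [← hA_eq] at hα hβ
  clear hsingle hA_eq hle
  rcases hα with rfl | rfl | rfl | rfl <;> rcases hβ with rfl | rfl | rfl | rfl <;>
    simp_all

end LowerSets

theorem not_isCartesian_fourPoints {d : ℕ} {F : Type*} [Field F] {i j k : Fin d} (hij : i ≠ j)
    (hik : i ≠ k) (hjk : j ≠ k) : ¬ IsCartesian (charVec F '' fourPointSupports i j k) := by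
  rintro ⟨A, y, hA, hy, hΞ⟩
  set g : (Fin d → ℕ) → Fin d → F := fun α c => y c (α c)
  have hg : Function.Injective g := fun a b h => funext fun c => hy c (congrFun h c)
  have hfin : A.Finite := Set.Finite.of_finite_image (hΞ ▸ toFinite _) hg.injOn
  have hcard : A.ncard ≤ 4 := by
    rw [← Set.ncard_image_of_injective A hg, ← hΞ]
    grw [Set.ncard_image_le (toFinite _), fourPointSupports, Set.ncard_insert_le,
      Set.ncard_insert_le, Set.ncard_insert_le, Set.ncard_singleton]
  obtain ⟨α, hα, hαj⟩ : charVec F {j} ∈ g '' A :=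
    hΞ ▸ mem_image_of_mem _ (by simp [fourPointSupports])
  obtain ⟨β, hβ, hβik⟩ : charVec F {i, k} ∈ g '' A :=
    hΞ ▸ mem_image_of_mem _ (by simp [fourPointSupports])
  have hdiff : ∀ c, charVec F {j} c ≠ charVec F {i, k} c → α c ≠ β c :=
    fun c hc h => hc (by rw [← hαj, ← hβik]; simp only [g, h])
  refine (hA.four_lt_ncard hfin hα hβ hij hik hjk ?_ ?_ ?_).not_ge hcard <;>
    refine hdiff _ ?_ <;> simp [charVec, hij, hik, hjk, hij.symm, hik.symm, hjk.symm]

theorem stmt13_general {F : Type*} [Field F] {d : ℕ} (hd : 3 ≤ d) :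
    ∃ Ξ : Set (Fin d → F), Ξ.Finite ∧ ¬ IsCartesian Ξ ∧
      ∃! O : Set (Fin d →₀ ℕ), IsMOQB (vanishIdeal Ξ) O := by
  have hij : (⟨0, by omega⟩ : Fin d) ≠ ⟨1, by omega⟩ := by simp
  have hik : (⟨0, by omega⟩ : Fin d) ≠ ⟨2, by omega⟩ := by simp
  have hjk : (⟨1, by omega⟩ : Fin d) ≠ ⟨2, by omega⟩ := by simp
  exact ⟨_, toFinite _, not_isCartesian_fourPoints hij hik hjk,
    existsUnique_isMOQB_fourPoints hij hik hjk⟩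

/-- Theorem 3.4. For every `d ≥ 3` there exists a finite set of distinct
points `Ξ ⊆ F^d` which is not Cartesian but whose vanishing ideal has a unique monomial order
quotient basis. -/
theorem stmt13 {F : Type*} [Field F] [CharZero F] {d : ℕ} (hd : 3 ≤ d) :
    ∃ Ξ : Set (Fin d → F), Ξ.Finite ∧ ¬ IsCartesian Ξ ∧
      ∃! O : Set (Fin d →₀ ℕ), IsMOQB (vanishIdeal Ξ) O :=
  stmt13_general hd
end

section
/- For d ≥ 3, let Ξ_d ⊂ F^d be the four-point set {(0,0,0,0,...,0), (0,1,0,0,...,0), (0,0,1,0,...,0), (1,0,1,0,...,0)} (the last d−3 coordinates of each point being zero). Then the set G = {x_1(x_1−1), x_2(x_2−1), x_3(x_3−1), x_1x_2, x_2x_3, (x_3−1)x_1, x_4, ..., x_d} is, for every monomial order ≺, the reduced Gröbner basis of the vanishing ideal I(Ξ_d) with respect to ≺ (i.e., G is a universal Gröbner basis for I(Ξ_d)). -/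
open MvPolynomial

/-- The set of leading monomials (exponents) of (nonzero) elements of `G`. -/
def LMset {d : ℕ} {F : Type*} [CommSemiring F] (o : MonOrder d)
    (G : Set (MvPolynomial (Fin d) F)) : Set (Fin d →₀ ℕ) :=
  {α | ∃ g ∈ G, o.IsLM g α}

/-- `G` is the reduced Gröbner basis of `I` w.r.t. the monomial order `o`: `G` is a finite set
of monic nonzero elements of `I` whose leading monomials minimally generate the monomial ideal
generated by the leading monomials of nonzero elements of `I`, and no monomial appearing in some
`g ∈ G` other than its leading monomial is divisible by the leading monomial of an element
of `G`. -/
def IsReducedGB {d : ℕ} {F : Type*} [Field F] (o : MonOrder d)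
    (I : Ideal (MvPolynomial (Fin d) F)) (G : Set (MvPolynomial (Fin d) F)) : Prop :=
  G.Finite ∧ G ⊆ (I : Set (MvPolynomial (Fin d) F)) ∧ (0 : MvPolynomial (Fin d) F) ∉ G ∧
  (∀ g ∈ G, ∀ α, o.IsLM g α → MvPolynomial.coeff α g = 1) ∧
  (∀ f ∈ I, f ≠ 0 → ∀ α, o.IsLM f α → ∃ g ∈ G, ∃ β, o.IsLM g β ∧ β ≤ α) ∧
  (∀ g ∈ G, ∀ g' ∈ G, g ≠ g' → ∀ β β', o.IsLM g β → o.IsLM g' β' → ¬ β ≤ β') ∧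
  (∀ g ∈ G, ∀ α ∈ g.support, ¬ o.IsLM g α → ∀ g' ∈ G, ∀ β, o.IsLM g' β → ¬ β ≤ α)
/-! Each element of `G` has the same leading monomial for every monomial order: its quadratic
part `x_i x_j` (`i, j ≤ 3`), or `x_i` (`i ≥ 4`). These monomials are pairwise incomparable under
divisibility, and the monomials divisible by none of them are `1, x_1, x_2, x_3`. If some
`f ∈ I(Ξ_d)` had one of these as leading monomial `m`, then no other monomial of `f` would be
divisible by `m`, so the coefficient of `m` in `f` is the value of `f` at the origin (`m = 1`) or
the difference of its values at two points of `Ξ_d` differing only in the coordinate of `m`;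
either way it vanishes. Two elements of `G` with the same leading monomial are equal: otherwise
their difference is a nonzero element of the ideal whose leading monomial is a non-leading
monomial of one of them, hence standard. -/

open Finsupp (single)

theorem X_mul_X_eq_monomial {σ R : Type*} [CommSemiring R] (i j : σ) :
    (X i * X j : MvPolynomial σ R) = monomial (single i 1 + single j 1) 1 := by
  rw [X, X, monomial_mul, one_mul]

theorem X_sub_one_mul_X_eq {σ R : Type*} [CommRing R] (i j : σ) :
    ((X j - 1) * X i : MvPolynomial σ R) =
      monomial (single i 1 + single j 1) 1 - monomial (single i 1) 1 := by
  rw [sub_mul, one_mul, mul_comm, X_mul_X_eq_monomial, X]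

namespace MonOrder

variable {d : ℕ}

theorem toLinearOrder_le_of_le (o : MonOrder d) {u v : Fin d →₀ ℕ} (h : u ≤ v) :
    o.toLinearOrder.le u v := by
  simpa [tsub_add_cancel_of_le h] using o.add_le_add 0 (v - u) u (o.zero_le _)

variable {o : MonOrder d} {R : Type*}

section CommSemiring

variable [CommSemiring R] {f : MvPolynomial (Fin d) R} {α β : Fin d →₀ ℕ}

theorem IsLM.unique (hα : o.IsLM f α) (hβ : o.IsLM f β) : α = β :=
  o.toLinearOrder.le_antisymm _ _ (hβ.2 α hα.1) (hα.2 β hβ.1)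

theorem IsLM.eq_of_le (h : o.IsLM f α) (hβ : β ∈ f.support) (hαβ : α ≤ β) : β = α :=
  o.toLinearOrder.le_antisymm _ _ (h.2 β hβ) (o.toLinearOrder_le_of_le hαβ)

theorem IsLM.ne_zero (h : o.IsLM f α) : f ≠ 0 :=
  support_nonempty.1 ⟨α, h.1⟩

theorem exists_isLM_s15 (hf : f ≠ 0) : ∃ α, o.IsLM f α :=
  @Finset.exists_max_image _ _ o.toLinearOrder f.support id (support_nonempty.2 hf)

theorem isLM_monomial [Nontrivial R] (u : Fin d →₀ ℕ) : o.IsLM (monomial u (1 : R)) u := by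
  classical
  simp [IsLM, support_monomial]

end CommSemiring

section CommRing

variable [CommRing R] {f : MvPolynomial (Fin d) R} {u v : Fin d →₀ ℕ}

theorem support_monomial_sub_monomial [Nontrivial R] (huv : u ≠ v) :
    (monomial u (1 : R) - monomial v 1).support = {u, v} := by
  classical
  ext β
  by_cases hu : u = β <;> by_cases hv : v = β <;> simp_all [coeff_monomial, eq_comm]

theorem isLM_monomial_sub_monomial [Nontrivial R] (hvu : v ≤ u) (hne : v ≠ u) :
    o.IsLM (monomial u (1 : R) - monomial v 1) u := by
  refine ⟨by simp [support_monomial_sub_monomial hne.symm], fun β hβ => ?_⟩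
  rw [support_monomial_sub_monomial hne.symm, Finset.mem_insert, Finset.mem_singleton] at hβ
  rcases hβ with rfl | rfl
  exacts [o.toLinearOrder.le_refl _, o.toLinearOrder_le_of_le hvu]

theorem isLM_X_mul_X [Nontrivial R] (i j : Fin d) :
    o.IsLM (X i * X j : MvPolynomial (Fin d) R) (single i 1 + single j 1) := by
  rw [X_mul_X_eq_monomial]
  exact o.isLM_monomial _

theorem isLM_X_sub_one_mul_X [Nontrivial R] (i j : Fin d) :
    o.IsLM ((X j - 1) * X i : MvPolynomial (Fin d) R) (single i 1 + single j 1) := by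
  rw [X_sub_one_mul_X_eq]
  exact o.isLM_monomial_sub_monomial le_self_add (by simp)

theorem isLM_X_mul_X_sub_one [Nontrivial R] (i : Fin d) :
    o.IsLM (X i * (X i - 1) : MvPolynomial (Fin d) R) (single i 1 + single i 1) := by
  rw [mul_comm]
  exact o.isLM_X_sub_one_mul_X i i

theorem IsLM.eval_eq_coeff_zero (h : o.IsLM f 0) (ξ : Fin d → R) : eval ξ f = coeff 0 f := by
  rw [eval_eq, Finset.sum_eq_single 0 (fun β hβ hne => absurd (h.eq_of_le hβ bot_le) hne)
    (fun h0 => absurd h.1 h0)]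
  simp

theorem IsLM.eval_sub_eval_update [DecidableEq (Fin d)] {i : Fin d}
    (h : o.IsLM f (single i 1)) (ξ : Fin d → R) (hξ : ξ i = 1) :
    eval ξ f - eval (Function.update ξ i 0) f = coeff (single i 1) f := by
  rw [eval_eq, eval_eq, ← Finset.sum_sub_distrib, Finset.sum_eq_single (single i 1)]
  · simp [hξ]
  · intro β hβ hne
    by_cases hβi : β i = 0
    · rw [← mul_sub, Finset.prod_congr rfl fun k hk => ?_, sub_self, mul_zero]
      rw [Function.update_of_ne (by rintro rfl; exact Finsupp.mem_support_iff.1 hk hβi)]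
    · exact absurd (h.eq_of_le hβ (Finsupp.single_le_iff.2 (Nat.one_le_iff_ne_zero.2 hβi))) hne
  · exact fun h0 => absurd h.1 h0

theorem eq_of_isLM_of_isLM {I : Ideal (MvPolynomial (Fin d) R)} {G : Set (MvPolynomial (Fin d) R)}
    (hGI : G ⊆ I) (hmonic : ∀ g ∈ G, ∀ α, o.IsLM g α → coeff α g = 1)
    (hlead : ∀ f ∈ I, f ≠ 0 → ∀ α, o.IsLM f α → ∃ g ∈ G, ∃ β, o.IsLM g β ∧ β ≤ α)
    (hred : ∀ g ∈ G, ∀ α ∈ g.support, ¬ o.IsLM g α → ∀ g' ∈ G, ∀ β, o.IsLM g' β → ¬ β ≤ α)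
    {g g' : MvPolynomial (Fin d) R} (hg : g ∈ G) (hg' : g' ∈ G) {β : Fin d →₀ ℕ}
    (hβ : o.IsLM g β) (hβ' : o.IsLM g' β) : g = g' := by
  classical
  by_contra hne
  have hne' : g - g' ≠ 0 := sub_ne_zero.2 hne
  obtain ⟨γ, hγ⟩ := exists_isLM_s15 (o := o) hne'
  obtain ⟨g'', hg'', β'', hβ'', hle⟩ := hlead _ (I.sub_mem (hGI hg) (hGI hg')) hne' γ hγ
  -- the leading terms of `g` and `g'` cancel, so `γ` is a non-leading monomial of one of them
  have hγβ : γ ≠ β := by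
    rintro rfl
    exact mem_support_iff.1 hγ.1
      (by rw [coeff_sub, hmonic g hg γ hβ, hmonic g' hg' γ hβ', sub_self])
  rcases Finset.mem_union.1 (support_sub (Fin d) g g' hγ.1) with hγg | hγg'
  · exact hred g hg γ hγg (fun h => hγβ (h.unique hβ)) g'' hg'' β'' hβ'' hle
  · exact hred g' hg' γ hγg' (fun h => hγβ (h.unique hβ')) g'' hg'' β'' hβ'' hle

end CommRing

end MonOrder

theorem mem_vanishIdeal {d : ℕ} {F : Type*} [Field F] {Ξ : Set (Fin d → F)}
    {f : MvPolynomial (Fin d) F} : f ∈ vanishIdeal Ξ ↔ ∀ ξ ∈ Ξ, eval ξ f = 0 := by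
  simp [vanishIdeal, RingHom.mem_ker]

namespace Finsupp

variable {σ : Type*}

theorem eq_of_le_of_degree_le {u v : σ →₀ ℕ} (huv : u ≤ v) (h : v.degree ≤ u.degree) :
    u = v := by
  have hdeg := congrArg degree (add_tsub_cancel_of_le huv)
  rw [map_add] at hdeg
  exact le_antisymm huv (tsub_eq_zero_iff_le.1 ((degree_eq_zero_iff _).1 (by omega)))

theorem eq_zero_or_eq_single_of_forall_not_single_add_single_le {α : σ →₀ ℕ}
    (h : ∀ i j, ¬ single i 1 + single j 1 ≤ α) : α = 0 ∨ ∃ i, α = single i 1 := by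
  by_contra! hα
  obtain ⟨i, hi⟩ := Finsupp.support_nonempty_iff.2 hα.1
  have hiα : single i 1 ≤ α := single_le_iff.2 (Nat.one_le_iff_ne_zero.2 (mem_support_iff.1 hi))
  obtain ⟨j, hj⟩ := Finsupp.support_nonempty_iff.2 fun h0 : α - single i 1 = 0 =>
    hα.2 i (le_antisymm (tsub_eq_zero_iff_le.1 h0) hiα)
  refine h i j ?_
  calc single i 1 + single j 1
      ≤ single i 1 + (α - single i 1) :=
        add_le_add_right (single_le_iff.2 (Nat.one_le_iff_ne_zero.2 (mem_support_iff.1 hj))) _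
    _ = α := add_tsub_cancel_of_le hiα

end Finsupp

/-- The leading exponents of the elements of the basis, the same for every monomial order. -/
def leadExps (d : ℕ) : Set (Fin d →₀ ℕ) :=
  {u | (∃ i j : Fin d, (i : ℕ) < 3 ∧ (j : ℕ) < 3 ∧ u = single i 1 + single j 1) ∨
    ∃ k : Fin d, 3 ≤ (k : ℕ) ∧ u = single k 1}

section LeadExps

variable {d : ℕ}

theorem single_add_single_apply_of_lt_three {i j k : Fin d} (hi : (i : ℕ) < 3) (hj : (j : ℕ) < 3)
    (hk : 3 ≤ (k : ℕ)) : (single i 1 + single j 1 : Fin d →₀ ℕ) k = 0 := by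
  simp only [Finsupp.add_apply, Finsupp.single_apply, Fin.ext_iff]
  split_ifs <;> omega

theorem leadExps_antichain {u v : Fin d →₀ ℕ} (hu : u ∈ leadExps d) (hv : v ∈ leadExps d)
    (huv : u ≤ v) : u = v := by
  rcases hu with ⟨i, j, hi, hj, rfl⟩ | ⟨k, hk, rfl⟩ <;>
    rcases hv with ⟨i', j', hi', hj', rfl⟩ | ⟨k', -, rfl⟩
  · exact Finsupp.eq_of_le_of_degree_le huv (by simp)
  · have := Finsupp.degree_mono huv
    simp at this
  · have := Finsupp.single_le_iff.1 huv
    rw [single_add_single_apply_of_lt_three hi' hj' hk] at this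
    omega
  · exact Finsupp.eq_of_le_of_degree_le huv (by simp)

theorem not_le_single_of_mem_leadExps {u : Fin d →₀ ℕ} (hu : u ∈ leadExps d) {i : Fin d}
    (hi : (i : ℕ) < 3) : ¬ u ≤ single i 1 := by
  rcases hu with ⟨i, j, -, -, rfl⟩ | ⟨k, hk, rfl⟩ <;> intro hle
  · have := Finsupp.degree_mono hle
    simp at this
  · have := Finsupp.single_le_iff.1 hle
    simp only [Finsupp.single_apply, Fin.ext_iff] at this
    split_ifs at this <;> omega

end LeadExps

section FourPoints

variable (F : Type*) [Field F] {d : ℕ}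

-- The paper's `Ξ_d` and `G`, with `i₀, i₁, i₂` the (0-based) indices of `x_1, x_2, x_3`.
def fourPoints (i₀ i₁ i₂ : Fin d) : Set (Fin d → F) :=
  {(fun _ => 0), (fun k => if k = i₁ then 1 else 0), (fun k => if k = i₂ then 1 else 0),
    (fun k => if k = i₀ ∨ k = i₂ then 1 else 0)}

def univGens (i₀ i₁ i₂ : Fin d) : Set (MvPolynomial (Fin d) F) :=
  {X i₀ * (X i₀ - 1), X i₁ * (X i₁ - 1), X i₂ * (X i₂ - 1), X i₀ * X i₁, X i₁ * X i₂,
    (X i₂ - 1) * X i₀} ∪ {f | ∃ i : Fin d, 3 ≤ (i : ℕ) ∧ f = X i}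

def HasStdTail (o : MonOrder d) (g : MvPolynomial (Fin d) F) : Prop :=
  ∃ u ∈ leadExps d, o.IsLM g u ∧ coeff u g = 1 ∧
    ∀ α ∈ g.support, α ≠ u → ∃ i : Fin d, (i : ℕ) < 3 ∧ α = single i 1

variable {F} {o : MonOrder d} {g g' : MvPolynomial (Fin d) F} {α β β' : Fin d →₀ ℕ}

theorem HasStdTail.ne_zero (hg : HasStdTail F o g) : g ≠ 0 :=
  let ⟨_, _, hu, _⟩ := hg
  hu.ne_zero

theorem HasStdTail.coeff_eq_one (hg : HasStdTail F o g) (hα : o.IsLM g α) : coeff α g = 1 := by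
  obtain ⟨u, -, hu, hcoeff, -⟩ := hg
  rwa [hα.unique hu]

theorem HasStdTail.eq_of_le (hg : HasStdTail F o g) (hg' : HasStdTail F o g')
    (hβ : o.IsLM g β) (hβ' : o.IsLM g' β') (hle : β ≤ β') : β = β' := by
  obtain ⟨u, hu, hLM, -⟩ := hg
  obtain ⟨u', hu', hLM', -⟩ := hg'
  rw [hβ.unique hLM, hβ'.unique hLM'] at hle ⊢
  exact leadExps_antichain hu hu' hle

theorem HasStdTail.not_le (hg : HasStdTail F o g) (hα : α ∈ g.support) (hnot : ¬ o.IsLM g α)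
    (hg' : HasStdTail F o g') (hβ : o.IsLM g' β) : ¬ β ≤ α := by
  obtain ⟨u, -, hu, -, htail⟩ := hg
  obtain ⟨i, hi, rfl⟩ := htail α hα fun h => hnot (h ▸ hu)
  obtain ⟨u', hu', hLM', -⟩ := hg'
  exact hβ.unique hLM' ▸ not_le_single_of_mem_leadExps hu' hi

variable {i₀ i₁ i₂ : Fin d}

theorem univGens_finite : (univGens F i₀ i₁ i₂).Finite := by
  refine (Set.toFinite _).union ((Set.finite_range X).subset ?_)
  rintro _ ⟨i, -, rfl⟩
  exact ⟨i, rfl⟩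

theorem univGens_subset_vanishIdeal (h₀ : (i₀ : ℕ) = 0) (h₁ : (i₁ : ℕ) = 1) (h₂ : (i₂ : ℕ) = 2) :
    univGens F i₀ i₁ i₂ ⊆ vanishIdeal (fourPoints F i₀ i₁ i₂) := by
  rintro g hg
  rw [SetLike.mem_coe, mem_vanishIdeal]
  rintro ξ (rfl | rfl | rfl | rfl) <;>
    rcases hg with (rfl | rfl | rfl | rfl | rfl | rfl) | ⟨i, hi, rfl⟩ <;>
    simp [Fin.ext_iff, h₀, h₁, h₂] <;> omega

variable (o)

theorem hasStdTail_X_mul_X {i j : Fin d} (hi : (i : ℕ) < 3) (hj : (j : ℕ) < 3) :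
    HasStdTail F o (X i * X j) := by
  classical
  refine ⟨_, Or.inl ⟨i, j, hi, hj, rfl⟩, o.isLM_X_mul_X i j, ?_, fun α hα hne => ?_⟩ <;>
    simp_all [X_mul_X_eq_monomial, support_monomial]

theorem hasStdTail_X_sub_one_mul_X {i j : Fin d} (hi : (i : ℕ) < 3) (hj : (j : ℕ) < 3) :
    HasStdTail F o ((X j - 1) * X i) := by
  classical
  have hne : single i 1 + single j 1 ≠ single i 1 := by simp
  refine ⟨_, Or.inl ⟨i, j, hi, hj, rfl⟩, o.isLM_X_sub_one_mul_X i j, ?_,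
    fun α hα hαu => ⟨i, hi, ?_⟩⟩
  · simp [X_sub_one_mul_X_eq, coeff_monomial]
  · rw [X_sub_one_mul_X_eq, MonOrder.support_monomial_sub_monomial hne] at hα
    simpa [hαu] using hα

theorem hasStdTail_X {k : Fin d} (hk : 3 ≤ (k : ℕ)) : HasStdTail F o (X k) := by
  classical
  refine ⟨_, Or.inr ⟨k, hk, rfl⟩, o.isLM_monomial _, by simp, fun α hα hne => ?_⟩
  simp_all [X, support_monomial]

theorem hasStdTail_of_mem_univGens (h₀ : (i₀ : ℕ) = 0) (h₁ : (i₁ : ℕ) = 1) (h₂ : (i₂ : ℕ) = 2)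
    {g : MvPolynomial (Fin d) F} (hg : g ∈ univGens F i₀ i₁ i₂) : HasStdTail F o g := by
  rcases hg with (rfl | rfl | rfl | rfl | rfl | rfl) | ⟨k, hk, rfl⟩
  · rw [mul_comm]
    exact hasStdTail_X_sub_one_mul_X o (by omega) (by omega)
  · rw [mul_comm]
    exact hasStdTail_X_sub_one_mul_X o (by omega) (by omega)
  · rw [mul_comm]
    exact hasStdTail_X_sub_one_mul_X o (by omega) (by omega)
  · exact hasStdTail_X_mul_X o (by omega) (by omega)
  · exact hasStdTail_X_mul_X o (by omega) (by omega)
  · exact hasStdTail_X_sub_one_mul_X o (by omega) (by omega)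
  · exact hasStdTail_X o hk

theorem val_lt_three_iff (h₀ : (i₀ : ℕ) = 0) (h₁ : (i₁ : ℕ) = 1) (h₂ : (i₂ : ℕ) = 2) {i : Fin d} :
    (i : ℕ) < 3 ↔ i = i₀ ∨ i = i₁ ∨ i = i₂ := by
  simp only [Fin.ext_iff, h₀, h₁, h₂]
  omega

theorem exists_mem_univGens_isLM (h₀ : (i₀ : ℕ) = 0) (h₁ : (i₁ : ℕ) = 1) (h₂ : (i₂ : ℕ) = 2)
    {i j : Fin d} (hi : (i : ℕ) < 3) (hj : (j : ℕ) < 3) :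
    ∃ g ∈ univGens F i₀ i₁ i₂, o.IsLM g (single i 1 + single j 1) := by
  rcases (val_lt_three_iff h₀ h₁ h₂).1 hi with h | h | h <;>
    rcases (val_lt_three_iff h₀ h₁ h₂).1 hj with h' | h' | h' <;> subst i j
  · exact ⟨_, by simp [univGens], o.isLM_X_mul_X_sub_one i₀⟩
  · exact ⟨_, by simp [univGens], o.isLM_X_mul_X i₀ i₁⟩
  · exact ⟨_, by simp [univGens], o.isLM_X_sub_one_mul_X i₀ i₂⟩
  · exact ⟨_, by simp [univGens], add_comm (single i₀ 1) _ ▸ o.isLM_X_mul_X i₀ i₁⟩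
  · exact ⟨_, by simp [univGens], o.isLM_X_mul_X_sub_one i₁⟩
  · exact ⟨_, by simp [univGens], o.isLM_X_mul_X i₁ i₂⟩
  · exact ⟨_, by simp [univGens], add_comm (single i₀ 1) _ ▸ o.isLM_X_sub_one_mul_X i₀ i₂⟩
  · exact ⟨_, by simp [univGens], add_comm (single i₁ 1) _ ▸ o.isLM_X_mul_X i₁ i₂⟩
  · exact ⟨_, by simp [univGens], o.isLM_X_mul_X_sub_one i₂⟩

theorem eq_zero_or_eq_single_of_forall_not_le (h₀ : (i₀ : ℕ) = 0) (h₁ : (i₁ : ℕ) = 1)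
    (h₂ : (i₂ : ℕ) = 2) {α : Fin d →₀ ℕ}
    (hα : ∀ g ∈ univGens F i₀ i₁ i₂, ∀ β, o.IsLM g β → ¬ β ≤ α) :
    α = 0 ∨ ∃ i : Fin d, (i : ℕ) < 3 ∧ α = single i 1 := by
  have hlin : ∀ k : Fin d, 3 ≤ (k : ℕ) → ¬ single k 1 ≤ α := fun k hk =>
    hα (X k : MvPolynomial (Fin d) F) (Or.inr ⟨k, hk, rfl⟩) _ (o.isLM_monomial _)
  have hquad : ∀ i j : Fin d, ¬ single i 1 + single j 1 ≤ α := by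
    intro i j hle
    by_cases hi : (i : ℕ) < 3
    · by_cases hj : (j : ℕ) < 3
      · obtain ⟨g, hg, hLM⟩ := exists_mem_univGens_isLM (F := F) o h₀ h₁ h₂ hi hj
        exact hα g hg _ hLM hle
      · exact hlin j (by omega) (le_add_self.trans hle)
    · exact hlin i (by omega) (le_self_add.trans hle)
  obtain h | ⟨i, rfl⟩ := Finsupp.eq_zero_or_eq_single_of_forall_not_single_add_single_le hquad
  · exact Or.inl h
  · exact Or.inr ⟨i, not_le.1 fun hi => hlin i hi le_rfl, rfl⟩

theorem exists_isLM_le_of_mem_vanishIdeal (h₀ : (i₀ : ℕ) = 0) (h₁ : (i₁ : ℕ) = 1)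
    (h₂ : (i₂ : ℕ) = 2) {f : MvPolynomial (Fin d) F} (hf : f ∈ vanishIdeal (fourPoints F i₀ i₁ i₂))
    {α : Fin d →₀ ℕ} (hα : o.IsLM f α) :
    ∃ g ∈ univGens F i₀ i₁ i₂, ∃ β, o.IsLM g β ∧ β ≤ α := by
  by_contra! hstd
  have hev : ∀ ξ ∈ fourPoints F i₀ i₁ i₂, eval ξ f = 0 := mem_vanishIdeal.1 hf
  have h02 : i₀ ≠ i₂ := fun h => by simp [h, h₂] at h₀
  apply mem_support_iff.1 hα.1
  rcases eq_zero_or_eq_single_of_forall_not_le o h₀ h₁ h₂ hstd with rfl | ⟨i, hi, rfl⟩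
  · rw [← hα.eval_eq_coeff_zero (fun _ => 0)]
    exact hev _ (by simp [fourPoints])
  -- the coefficient of `x_i` is the difference of the values of `f` at two points of
  -- `fourPoints` differing only in the `i`-th coordinate
  have hcoeff : ∀ ξ ∈ fourPoints F i₀ i₁ i₂, ∀ ξ' ∈ fourPoints F i₀ i₁ i₂,
      Function.update ξ i 0 = ξ' → ξ i = 1 → coeff (single i 1) f = 0 := by
    rintro ξ hξ _ hξ' rfl hξi
    rw [← hα.eval_sub_eval_update ξ hξi, hev _ hξ, hev _ hξ', sub_zero]
  obtain h | h | h := (val_lt_three_iff h₀ h₁ h₂).1 hi <;> subst i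
  · refine hcoeff (fun k => if k = i₀ ∨ k = i₂ then 1 else 0) (by simp [fourPoints])
      (fun k => if k = i₂ then 1 else 0) (by simp [fourPoints]) ?_ (by simp)
    ext k
    rcases eq_or_ne k i₀ with rfl | hk <;> simp [*]
  · refine hcoeff (fun k => if k = i₁ then 1 else 0) (by simp [fourPoints])
      (fun _ => 0) (by simp [fourPoints]) ?_ (by simp)
    ext k
    rcases eq_or_ne k i₁ with rfl | hk <;> simp [*]
  · refine hcoeff (fun k => if k = i₂ then 1 else 0) (by simp [fourPoints])
      (fun _ => 0) (by simp [fourPoints]) ?_ (by simp)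
    ext k
    rcases eq_or_ne k i₂ with rfl | hk <;> simp [*]

end FourPoints

theorem stmt15_general {F : Type*} [Field F] {d : ℕ}
    (i₀ i₁ i₂ : Fin d) (h₀ : (i₀ : ℕ) = 0) (h₁ : (i₁ : ℕ) = 1) (h₂ : (i₂ : ℕ) = 2) :
    ∀ o : MonOrder d,
      IsReducedGB o
        (vanishIdeal ({(fun _ => 0), (fun k => if k = i₁ then 1 else 0),
            (fun k => if k = i₂ then 1 else 0),
            (fun k => if k = i₀ ∨ k = i₂ then 1 else 0)} : Set (Fin d → F)))
        (({X i₀ * (X i₀ - 1), X i₁ * (X i₁ - 1), X i₂ * (X i₂ - 1),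
            X i₀ * X i₁, X i₁ * X i₂, (X i₂ - 1) * X i₀} ∪
          {f | ∃ i : Fin d, 3 ≤ (i : ℕ) ∧ f = X i}) : Set (MvPolynomial (Fin d) F)) := by
  intro o
  change IsReducedGB o (vanishIdeal (fourPoints F i₀ i₁ i₂)) (univGens F i₀ i₁ i₂)
  set I := vanishIdeal (fourPoints F i₀ i₁ i₂)
  set G := univGens F i₀ i₁ i₂
  have hstd : ∀ g ∈ G, HasStdTail F o g := fun _ => hasStdTail_of_mem_univGens o h₀ h₁ h₂
  have hGI : G ⊆ I := univGens_subset_vanishIdeal h₀ h₁ h₂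
  have hmonic : ∀ g ∈ G, ∀ α, o.IsLM g α → coeff α g = 1 :=
    fun g hg _ hα => (hstd g hg).coeff_eq_one hα
  have hlead : ∀ f ∈ I, f ≠ 0 → ∀ α, o.IsLM f α → ∃ g ∈ G, ∃ β, o.IsLM g β ∧ β ≤ α :=
    fun _ hf _ _ hα => exists_isLM_le_of_mem_vanishIdeal o h₀ h₁ h₂ hf hα
  have hred : ∀ g ∈ G, ∀ α ∈ g.support, ¬ o.IsLM g α → ∀ g' ∈ G, ∀ β, o.IsLM g' β → ¬ β ≤ α :=
    fun g hg _ hα hnot g' hg' _ hβ => (hstd g hg).not_le hα hnot (hstd g' hg') hβ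
  refine ⟨univGens_finite, hGI, fun h0 => (hstd 0 h0).ne_zero rfl, hmonic, hlead, ?_, hred⟩
  intro g hg g' hg' hne β β' hβ hβ' hle
  rw [(hstd g hg).eq_of_le (hstd g' hg') hβ hβ' hle] at hβ
  exact hne (MonOrder.eq_of_isLM_of_isLM hGI hmonic hlead hred hg hg' hβ hβ')

/-- For `d ≥ 3`, let `Ξ_d ⊆ F^d` be the four-point set
`{(0,0,0,0,…,0), (0,1,0,0,…,0), (0,0,1,0,…,0), (1,0,1,0,…,0)}` (coordinates indexed by
`i₀, i₁, i₂`, the first three indices). Then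
`G = {x₁(x₁−1), x₂(x₂−1), x₃(x₃−1), x₁x₂, x₂x₃, (x₃−1)x₁, x₄, …, x_d}` is, for every monomial
order `≺`, the reduced Gröbner basis of `I(Ξ_d)` w.r.t. `≺`, i.e. `G` is a universal Gröbner
basis for `I(Ξ_d)`. -/
theorem stmt15 {F : Type*} [Field F] [CharZero F] {d : ℕ} (hd : 3 ≤ d)
    (i₀ i₁ i₂ : Fin d) (h₀ : (i₀ : ℕ) = 0) (h₁ : (i₁ : ℕ) = 1) (h₂ : (i₂ : ℕ) = 2) :
    ∀ o : MonOrder d,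
      IsReducedGB o
        (vanishIdeal ({(fun _ => 0), (fun k => if k = i₁ then 1 else 0),
            (fun k => if k = i₂ then 1 else 0),
            (fun k => if k = i₀ ∨ k = i₂ then 1 else 0)} : Set (Fin d → F)))
        (({X i₀ * (X i₀ - 1), X i₁ * (X i₁ - 1), X i₂ * (X i₂ - 1),
            X i₀ * X i₁, X i₁ * X i₂, (X i₂ - 1) * X i₀} ∪
          {f | ∃ i : Fin d, 3 ≤ (i : ℕ) ∧ f = X i}) : Set (MvPolynomial (Fin d) F)) :=
  stmt15_general i₀ i₁ i₂ h₀ h₁ h₂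
end
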